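/- arXiv:2601.10756 — 10 statements merged into one kernel-verified Lean document; each statement's English description precedes it below -/
import Mathlib

section
/- Let T be a strict t-norm, f : [0,1] → [0,1] non-decreasing, and define F(x,y) = f^{(-1)}(T(f(x),f(y))). If F satisfies the cancellation law, then f is strictly increasing and lim_{x→0⁺} f(x) = 0 and f(0) = 0. -/
/-- A t-subnorm on `[0,1]`: commutative, associative, monotone, below `min`. -/
def IsTSubnorm (F : ℝ → ℝ → ℝ) : Prop :=
  (∀ x ∈ Set.Icc (0:ℝ) 1, ∀ y ∈ Set.Icc (0:ℝ) 1, F x y ∈ Set.Icc (0:ℝ) 1) ∧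
  (∀ x ∈ Set.Icc (0:ℝ) 1, ∀ y ∈ Set.Icc (0:ℝ) 1, F x y = F y x) ∧
  (∀ x ∈ Set.Icc (0:ℝ) 1, ∀ y ∈ Set.Icc (0:ℝ) 1, ∀ z ∈ Set.Icc (0:ℝ) 1,
    F (F x y) z = F x (F y z)) ∧
  (∀ x ∈ Set.Icc (0:ℝ) 1, ∀ y ∈ Set.Icc (0:ℝ) 1, ∀ z ∈ Set.Icc (0:ℝ) 1,
    y ≤ z → F x y ≤ F x z) ∧
  (∀ x ∈ Set.Icc (0:ℝ) 1, ∀ y ∈ Set.Icc (0:ℝ) 1, F x y ≤ min x y)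

/-- A t-norm on `[0,1]`: commutative, associative, monotone, with neutral element 1. -/
def IsTNorm (T : ℝ → ℝ → ℝ) : Prop :=
  (∀ x ∈ Set.Icc (0:ℝ) 1, ∀ y ∈ Set.Icc (0:ℝ) 1, T x y ∈ Set.Icc (0:ℝ) 1) ∧
  (∀ x ∈ Set.Icc (0:ℝ) 1, ∀ y ∈ Set.Icc (0:ℝ) 1, T x y = T y x) ∧
  (∀ x ∈ Set.Icc (0:ℝ) 1, ∀ y ∈ Set.Icc (0:ℝ) 1, ∀ z ∈ Set.Icc (0:ℝ) 1,
    T (T x y) z = T x (T y z)) ∧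
  (∀ x ∈ Set.Icc (0:ℝ) 1, ∀ y ∈ Set.Icc (0:ℝ) 1, ∀ z ∈ Set.Icc (0:ℝ) 1,
    y ≤ z → T x y ≤ T x z) ∧
  (∀ x ∈ Set.Icc (0:ℝ) 1, T x 1 = x)

/-- Strict monotonicity: `T x y < T x z` whenever `x > 0` and `y < z`. -/
def StrictlyMonotoneOp (T : ℝ → ℝ → ℝ) : Prop :=
  ∀ x ∈ Set.Icc (0:ℝ) 1, ∀ y ∈ Set.Icc (0:ℝ) 1, ∀ z ∈ Set.Icc (0:ℝ) 1,
    0 < x → y < z → T x y < T x z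

/-- Continuity of a binary operation on `[0,1]²`. -/
def ContinuousOp (T : ℝ → ℝ → ℝ) : Prop :=
  ContinuousOn (fun p : ℝ × ℝ => T p.1 p.2) (Set.Icc (0:ℝ) 1 ×ˢ Set.Icc (0:ℝ) 1)

/-- A strict t-norm: a continuous, strictly monotone t-norm. -/
def IsStrictTNorm (T : ℝ → ℝ → ℝ) : Prop :=
  IsTNorm T ∧ ContinuousOp T ∧ StrictlyMonotoneOp T

/-- The cancellation law: `F x y = F x z` implies `x = 0` or `y = z`. -/
def Cancellative (F : ℝ → ℝ → ℝ) : Prop :=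
  ∀ x ∈ Set.Icc (0:ℝ) 1, ∀ y ∈ Set.Icc (0:ℝ) 1, ∀ z ∈ Set.Icc (0:ℝ) 1,
    F x y = F x z → x = 0 ∨ y = z

/-- The conditional cancellation law: `F x y = F x z > 0` implies `y = z`. -/
def CondCancellative (F : ℝ → ℝ → ℝ) : Prop :=
  ∀ x ∈ Set.Icc (0:ℝ) 1, ∀ y ∈ Set.Icc (0:ℝ) 1, ∀ z ∈ Set.Icc (0:ℝ) 1,
    F x y = F x z → 0 < F x y → y = z

/-- Pseudo-inverse of a non-decreasing function `f : [0,1] → [0,1]`: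
`f⁽⁻¹⁾(y) = sup {x ∈ [0,1] : f x < y}` (in ℝ, `sSup ∅ = 0`). -/
noncomputable def pinv (f : ℝ → ℝ) (y : ℝ) : ℝ :=
  sSup {x | x ∈ Set.Icc (0:ℝ) 1 ∧ f x < y}

/-- Pseudo-inverse of a non-increasing function `f : [0,1] → [0,1]`:
`f⁽⁻¹⁾(y) = sup {x ∈ [0,1] : f x > y}` (in ℝ, `sSup ∅ = 0`). -/
noncomputable def pinvDec (f : ℝ → ℝ) (y : ℝ) : ℝ :=
  sSup {x | x ∈ Set.Icc (0:ℝ) 1 ∧ y < f x}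

theorem cancellative_implies_strictMono (T : ℝ → ℝ → ℝ) (f : ℝ → ℝ)
    (hT : IsStrictTNorm T)
    (hmap : ∀ x ∈ Set.Icc (0:ℝ) 1, f x ∈ Set.Icc (0:ℝ) 1)
    (hf : MonotoneOn f (Set.Icc (0:ℝ) 1))
    (hcanc : Cancellative (fun x y => pinv f (T (f x) (f y)))) :
    StrictMonoOn f (Set.Icc (0:ℝ) 1) ∧
      Filter.Tendsto f (nhdsWithin 0 (Set.Ioi 0)) (nhds 0) ∧ f 0 = 0 := by
  obtain ⟨⟨hrange, hcomm, hassoc, hmono, hone⟩, hcont, hstrict⟩ := hT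
  have h01 : (1:ℝ) ∈ Set.Icc (0:ℝ) 1 := ⟨by norm_num, le_refl 1⟩
  have h00 : (0:ℝ) ∈ Set.Icc (0:ℝ) 1 := ⟨le_refl 0, by norm_num⟩
  -- strict monotonicity
  have hsm : StrictMonoOn f (Set.Icc (0:ℝ) 1) := by
    intro a ha b hb hab
    rcases lt_or_eq_of_le (hf ha hb hab.le) with h | h
    · exact h
    · exfalso
      rcases hcanc 1 h01 a ha b hb (by simp only [h]) with h1 | h1
      · norm_num at h1
      · exact hab.ne h1
  have hIoc : ∀ u ∈ Set.Ioc (0:ℝ) 1, u ∈ Set.Icc (0:ℝ) 1 := fun u hu => ⟨hu.1.le, hu.2⟩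
  set L := sInf (f '' Set.Ioc 0 1) with hLdef
  have hne : (f '' Set.Ioc 0 1).Nonempty := ⟨f 1, 1, ⟨one_pos, le_refl 1⟩, rfl⟩
  have hbdd : BddBelow (f '' Set.Ioc 0 1) := by
    refine ⟨0, ?_⟩
    rintro v ⟨u, hu, rfl⟩
    exact (hmap u (hIoc u hu)).1
  have hL0 : 0 ≤ L := by
    refine le_csInf hne ?_
    rintro v ⟨u, hu, rfl⟩
    exact (hmap u (hIoc u hu)).1
  have hLle : ∀ u ∈ Set.Ioc (0:ℝ) 1, L ≤ f u := fun u hu => csInf_le hbdd ⟨u, hu, rfl⟩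
  have hf0L : f 0 ≤ L := by
    refine le_csInf hne ?_
    rintro v ⟨u, hu, rfl⟩
    exact hf h00 (hIoc u hu) hu.1.le
  have hL1 : L ≤ 1 := le_trans (hLle 1 ⟨one_pos, le_refl 1⟩) (hmap 1 h01).2
  -- key pinv lemma
  have hpinv0 : ∀ v, v ≤ L → pinv f v = 0 := by
    intro v hv
    have hsub : {x | x ∈ Set.Icc (0:ℝ) 1 ∧ f x < v} ⊆ {0} := by
      rintro x ⟨hx, hfx⟩
      by_contra hx0
      have hxpos : 0 < x := lt_of_le_of_ne hx.1 (Ne.symm hx0)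
      exact absurd hfx (not_lt.2 (le_trans hv (hLle x ⟨hxpos, hx.2⟩)))
    rcases Set.subset_singleton_iff_eq.1 hsub with h | h
    · rw [pinv, h, Real.sSup_empty]
    · rw [pinv, h, csSup_singleton]
  -- the main contradiction: L = 0
  have hLzero : L ≤ 0 := by
    by_contra hpos
    push_neg at hpos
    rcases eq_or_lt_of_le hL1 with hL1' | hL1'
    · -- L = 1, so f ≡ 1 on (0,1], contradicting strict monotonicity
      have hhalf : ((1:ℝ)/2) ∈ Set.Icc (0:ℝ) 1 := ⟨by norm_num, by norm_num⟩
      have h1 : f (1/2) = 1 :=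
        le_antisymm (hmap _ hhalf).2 (hL1' ▸ hLle (1/2) ⟨by norm_num, by norm_num⟩)
      have h2 : f 1 = 1 := le_antisymm (hmap 1 h01).2 (hL1' ▸ hLle 1 ⟨one_pos, le_refl 1⟩)
      have := hsm hhalf h01 (by norm_num : (1:ℝ)/2 < 1)
      rw [h1, h2] at this
      exact lt_irrefl 1 this
    · have hLmem : L ∈ Set.Icc (0:ℝ) 1 := ⟨hL0, hL1⟩
      have hTLL : T L L < L := by
        have := hstrict L hLmem L hLmem 1 h01 hpos hL1'
        rwa [hone L hLmem] at this
      -- continuity of t ↦ T t t on [L,1] at L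
      have hg : ContinuousWithinAt (fun t : ℝ => T t t) (Set.Icc L 1) L := by
        have hmaps : Set.MapsTo (fun t : ℝ => ((t, t) : ℝ × ℝ)) (Set.Icc L 1)
            (Set.Icc (0:ℝ) 1 ×ˢ Set.Icc (0:ℝ) 1) := by
          intro t ht
          have ht' : t ∈ Set.Icc (0:ℝ) 1 := ⟨le_trans hL0 ht.1, ht.2⟩
          exact ⟨ht', ht'⟩
        have hcomp : ContinuousWithinAt
            ((fun p : ℝ × ℝ => T p.1 p.2) ∘ (fun t : ℝ => ((t, t) : ℝ × ℝ)))
            (Set.Icc L 1) L :=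
          ContinuousWithinAt.comp (hcont (L, L) ⟨hLmem, hLmem⟩)
            ((continuous_id.prodMk continuous_id).continuousWithinAt) hmaps
        exact hcomp
      have hev : ∀ᶠ t in nhdsWithin L (Set.Icc L 1), T t t < L :=
        hg.eventually_lt_const hTLL
      obtain ⟨δ, hδ, hball⟩ := Metric.mem_nhdsWithin_iff.1 hev
      set b := min (L + δ/2) ((L+1)/2) with hbdef
      have hbL : L < b := lt_min (by linarith) (by linarith)
      have hble : b ≤ L + δ/2 := min_le_left _ _
      have hb1 : b ≤ 1 := le_trans (min_le_right _ _) (by linarith)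
      have hbmem : b ∈ Set.Icc (0:ℝ) 1 := ⟨le_trans hL0 hbL.le, hb1⟩
      have hdist : dist b L < δ := by
        rw [Real.dist_eq, abs_lt]
        constructor <;> linarith
      have hTbb : T b b < L := hball ⟨Metric.mem_ball.2 hdist, hbL.le, hb1⟩
      obtain ⟨v, ⟨u, hu, rfl⟩, hub⟩ := exists_lt_of_csInf_lt hne hbL
      have humem : u ∈ Set.Icc (0:ℝ) 1 := hIoc u hu
      have hfumem := hmap u humem
      have hf0mem := hmap 0 h00
      have h1 : T (f u) (f 0) ≤ L := by
        calc T (f u) (f 0) = T (f 0) (f u) := hcomm _ hfumem _ hf0mem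
          _ ≤ T (f 0) 1 := hmono _ hf0mem _ hfumem 1 h01 hfumem.2
          _ = f 0 := hone _ hf0mem
          _ ≤ L := hf0L
      have h2 : T (f u) (f u) ≤ L := by
        have s1 : T (f u) (f u) ≤ T (f u) b := hmono _ hfumem _ hfumem _ hbmem hub.le
        have s2 : T (f u) b ≤ T b b := by
          rw [hcomm _ hfumem _ hbmem]
          exact hmono _ hbmem _ hfumem _ hbmem hub.le
        linarith
      have heq : pinv f (T (f u) (f 0)) = pinv f (T (f u) (f u)) := by
        rw [hpinv0 _ h1, hpinv0 _ h2]
      rcases hcanc u humem 0 h00 u humem heq with h | h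
      · exact absurd h (ne_of_gt hu.1)
      · exact absurd h.symm (ne_of_gt hu.1)
  have hL : L = 0 := le_antisymm hLzero hL0
  have hf0 : f 0 = 0 := le_antisymm (hf0L.trans hLzero) (hmap 0 h00).1
  refine ⟨hsm, ?_, hf0⟩
  rw [tendsto_order]
  constructor
  · intro a ha
    filter_upwards [Ioo_mem_nhdsGT_of_mem
      (Set.mem_Ico.2 ⟨le_refl (0:ℝ), by norm_num⟩ : (0:ℝ) ∈ Set.Ico (0:ℝ) 1)] with x hx
    exact lt_of_lt_of_le ha (hmap x ⟨hx.1.le, hx.2.le⟩).1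
  · intro a ha
    have hLa : L < a := by rw [hL]; exact ha
    obtain ⟨v, ⟨u, hu, rfl⟩, hua⟩ := exists_lt_of_csInf_lt hne hLa
    filter_upwards [Ioo_mem_nhdsGT_of_mem (Set.mem_Ico.2 ⟨le_refl (0:ℝ), hu.1⟩)] with x hx
    exact lt_of_le_of_lt (hf ⟨hx.1.le, le_trans hx.2.le hu.2⟩ (hIoc u hu) hx.2.le) hua
end

section
/- Let T be a strict t-norm, f : [0,1] → [0,1] a monotone function with range M, and F(x,y) = f^{(-1)}(T(f(x),f(y))). Then F is a cancellative t-subnorm if and only if f is strictly increasing and T(M,M) ⊆ M (i.e., T(a,b) ∈ M for all a,b ∈ M). -/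
open Classical in
/-- Pseudo-inverse of a monotone function: the non-decreasing version when `f` is
non-decreasing on `[0,1]`, the non-increasing version otherwise. -/
noncomputable def pinvMono (f : ℝ → ℝ) (y : ℝ) : ℝ :=
  if MonotoneOn f (Set.Icc (0:ℝ) 1) then pinv f y else pinvDec f y

section AuxPinv

variable {f : ℝ → ℝ} {s s1 s2 u : ℝ}

private lemma aux_bddS : BddAbove {x | x ∈ Set.Icc (0:ℝ) 1 ∧ f x < s} :=
  ⟨1, fun _ hx => hx.1.2⟩

private lemma aux_pinv_nonneg : 0 ≤ pinv f s :=
  Real.sSup_nonneg (fun _ hx => hx.1.1)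

private lemma aux_pinv_le_one : pinv f s ≤ 1 :=
  Real.sSup_le (fun _ hx => hx.1.2) zero_le_one

private lemma aux_pinv_mem : pinv f s ∈ Set.Icc (0:ℝ) 1 :=
  ⟨aux_pinv_nonneg, aux_pinv_le_one⟩

private lemma aux_le_pinv (hu : u ∈ Set.Icc (0:ℝ) 1) (h : f u < s) : u ≤ pinv f s :=
  le_csSup aux_bddS ⟨hu, h⟩

private lemma aux_le_f_of_pinv_lt (hu : u ∈ Set.Icc (0:ℝ) 1) (h : pinv f s < u) : s ≤ f u := by
  by_contra h'
  exact absurd (aux_le_pinv hu (not_le.mp h')) (not_le.mpr h)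

private lemma aux_f_lt_of_lt_pinv (hsm : StrictMonoOn f (Set.Icc (0:ℝ) 1))
    (hu : u ∈ Set.Icc (0:ℝ) 1) (h : u < pinv f s) : f u < s := by
  have hne : {x | x ∈ Set.Icc (0:ℝ) 1 ∧ f x < s}.Nonempty := by
    by_contra h'
    rw [Set.not_nonempty_iff_eq_empty] at h'
    rw [pinv, h', Real.sSup_empty] at h
    linarith [hu.1]
  obtain ⟨v, hv, huv⟩ := exists_lt_of_lt_csSup hne h
  exact lt_trans (hsm hu hv.1 huv) hv.2

private lemma aux_pinv_f_eq (hsm : StrictMonoOn f (Set.Icc (0:ℝ) 1))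
    (hu : u ∈ Set.Icc (0:ℝ) 1) : pinv f (f u) = u := by
  refine le_antisymm (Real.sSup_le ?_ hu.1) ?_
  · intro v hv
    by_contra hlt
    push_neg at hlt
    exact absurd (hsm hu hv.1 hlt) (not_lt.mpr hv.2.le)
  · by_contra hlt
    push_neg at hlt
    obtain ⟨v, hv1, hv2⟩ := exists_between hlt
    have hvI : v ∈ Set.Icc (0:ℝ) 1 := ⟨le_trans aux_pinv_nonneg hv1.le, le_trans hv2.le hu.2⟩
    exact absurd (aux_le_pinv hvI (hsm hvI hu hv2)) (not_le.mpr hv1)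

private lemma aux_pinv_mono (h : s1 ≤ s2) : pinv f s1 ≤ pinv f s2 :=
  Real.sSup_le (fun v hv => le_csSup aux_bddS ⟨hv.1, lt_of_lt_of_le hv.2 h⟩) aux_pinv_nonneg

private lemma aux_pinv_pos_elim (h : 0 < pinv f s) :
    ∃ u, u ∈ Set.Icc (0:ℝ) 1 ∧ 0 < u ∧ f u < s := by
  have hne : {x | x ∈ Set.Icc (0:ℝ) 1 ∧ f x < s}.Nonempty := by
    by_contra h'
    rw [Set.not_nonempty_iff_eq_empty] at h'
    rw [pinv, h', Real.sSup_empty] at h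
    linarith
  obtain ⟨v, hv, h0v⟩ := exists_lt_of_lt_csSup hne h
  exact ⟨v, hv.1, h0v, hv.2⟩

private lemma aux_pinv_sandwich (hsm : StrictMonoOn f (Set.Icc (0:ℝ) 1))
    (heq : pinv f s1 = pinv f s2) (hu : u ∈ Set.Icc (0:ℝ) 1)
    (h1 : s1 ≤ f u) (h2 : f u < s2) : u = pinv f s1 := by
  refine le_antisymm ?_ (Real.sSup_le ?_ hu.1)
  · rw [heq]; exact aux_le_pinv hu h2
  · intro v hv
    by_contra hlt
    push_neg at hlt
    have hA : f u < f v := hsm hu hv.1 hlt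
    have hB : f v < f u := lt_of_lt_of_le hv.2 h1
    linarith

end AuxPinv

theorem cancellative_tsubnorm_iff (T : ℝ → ℝ → ℝ) (f : ℝ → ℝ)
    (hT : IsStrictTNorm T)
    (hmap : ∀ x ∈ Set.Icc (0:ℝ) 1, f x ∈ Set.Icc (0:ℝ) 1)
    (hf : MonotoneOn f (Set.Icc (0:ℝ) 1) ∨ AntitoneOn f (Set.Icc (0:ℝ) 1))
    (M : Set ℝ) (hM : M = f '' Set.Icc (0:ℝ) 1)
    (F : ℝ → ℝ → ℝ) (hF : ∀ x y, F x y = pinvMono f (T (f x) (f y))) :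
    (IsTSubnorm F ∧ Cancellative F) ↔
      (StrictMonoOn f (Set.Icc (0:ℝ) 1) ∧ ∀ a ∈ M, ∀ b ∈ M, T a b ∈ M) := by
  obtain ⟨⟨Trange, Tcomm, Tassoc, Tmono, Tone⟩, Tcont, Tstrict⟩ := hT
  have h0I : (0:ℝ) ∈ Set.Icc (0:ℝ) 1 := ⟨le_refl 0, zero_le_one⟩
  have h1I : (1:ℝ) ∈ Set.Icc (0:ℝ) 1 := ⟨zero_le_one, le_refl 1⟩
  have hhI : (1/2:ℝ) ∈ Set.Icc (0:ℝ) 1 := by norm_num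
  -- basic t-norm facts
  have TzeroR : ∀ x ∈ Set.Icc (0:ℝ) 1, T x 0 = 0 := by
    intro x hx
    have h1 : T x 0 = T 0 x := Tcomm x hx 0 h0I
    have h2 : T 0 x ≤ T 0 1 := Tmono 0 h0I x hx 1 h1I hx.2
    have h3 : T 0 1 = 0 := Tone 0 h0I
    have h4 : 0 ≤ T x 0 := (Trange x hx 0 h0I).1
    linarith
  have TleL : ∀ x ∈ Set.Icc (0:ℝ) 1, ∀ y ∈ Set.Icc (0:ℝ) 1, T x y ≤ x := by
    intro x hx y hy
    have h := Tmono x hx y hy 1 h1I hy.2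
    rwa [Tone x hx] at h
  have TleR : ∀ x ∈ Set.Icc (0:ℝ) 1, ∀ y ∈ Set.Icc (0:ℝ) 1, T x y ≤ y := by
    intro x hx y hy
    rw [Tcomm x hx y hy]
    exact TleL y hy x hx
  have Tpos : ∀ x ∈ Set.Icc (0:ℝ) 1, ∀ y ∈ Set.Icc (0:ℝ) 1, 0 < x → 0 < y → 0 < T x y := by
    intro x hx y hy hx0 hy0
    have h := Tstrict x hx 0 h0I y hy hx0 hy0
    rwa [TzeroR x hx] at h
  have Tcancel : ∀ x ∈ Set.Icc (0:ℝ) 1, ∀ y ∈ Set.Icc (0:ℝ) 1, ∀ z ∈ Set.Icc (0:ℝ) 1,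
      0 < x → T x y = T x z → y = z := by
    intro x hx y hy z hz hx0 heq
    rcases lt_trichotomy y z with h|h|h
    · exact absurd heq (ne_of_lt (Tstrict x hx y hy z hz hx0 h))
    · exact h
    · exact absurd heq.symm (ne_of_lt (Tstrict x hx z hz y hy hx0 h))
  constructor
  · rintro ⟨⟨Frange, Fcomm, Fassoc, Fmono, Fmin⟩, Fcanc⟩
    -- Phase 1 : f must be monotone (the pinvDec branch is contradictory)
    have hmono : MonotoneOn f (Set.Icc (0:ℝ) 1) := by
      by_contra hmono
      have hFd : ∀ x y, F x y = pinvDec f (T (f x) (f y)) := by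
        intro x y
        rw [hF]
        simp only [pinvMono]
        rw [if_neg hmono]
      have hF0 : ∀ x ∈ Set.Icc (0:ℝ) 1, F x 0 = 0 := by
        intro x hx
        have h1 : F x 0 ≤ 0 := le_trans (Fmin x hx 0 h0I) (min_le_right x 0)
        exact le_antisymm h1 (Frange x hx 0 h0I).1
      have hb : ∀ x ∈ Set.Icc (0:ℝ) 1, ∀ u ∈ Set.Icc (0:ℝ) 1, 0 < u →
          f u ≤ T (f x) (f 0) := by
        intro x hx u hu hu0
        by_contra h
        push_neg at h
        have hle : u ≤ pinvDec f (T (f x) (f 0)) := by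
          simp only [pinvDec]
          exact le_csSup ⟨1, fun v hv => hv.1.2⟩ ⟨hu, h⟩
        rw [← hFd x 0, hF0 x hx] at hle
        linarith
      have hc : ∀ u ∈ Set.Icc (0:ℝ) 1, 0 < u → T (f u) (f 0) = f u := by
        intro u hu hu0
        exact le_antisymm (TleL (f u) (hmap u hu) (f 0) (hmap 0 h0I)) (hb u hu u hu hu0)
      have hconst : ∀ u ∈ Set.Icc (0:ℝ) 1, 0 < u → ∀ v ∈ Set.Icc (0:ℝ) 1, 0 < v →
          f u = f v := by
        by_cases h01 : f 0 = 1
        · intro u hu hu0 v hv hv0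
          have hA : f u ≤ T (f v) (f 0) := hb v hv u hu hu0
          have hB : f v ≤ T (f u) (f 0) := hb u hu v hv hv0
          rw [h01, Tone (f v) (hmap v hv)] at hA
          rw [h01, Tone (f u) (hmap u hu)] at hB
          linarith
        · have hz : ∀ u ∈ Set.Icc (0:ℝ) 1, 0 < u → f u = 0 := by
            intro u hu hu0
            by_contra hfu
            have hfu0 : 0 < f u := lt_of_le_of_ne (hmap u hu).1 (Ne.symm hfu)
            have hf01 : f 0 < 1 := lt_of_le_of_ne (hmap 0 h0I).2 h01
            have h := Tstrict (f u) (hmap u hu) (f 0) (hmap 0 h0I) 1 h1I hfu0 hf01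
            rw [Tone (f u) (hmap u hu), hc u hu hu0] at h
            exact lt_irrefl _ h
          intro u hu hu0 v hv hv0
          rw [hz u hu hu0, hz v hv hv0]
      have h12 : F 1 (1/2) = F 1 1 := by
        rw [hFd, hFd, hconst (1/2) hhI (by norm_num) 1 h1I one_pos]
      rcases Fcanc 1 h1I (1/2) hhI 1 h1I h12 with h|h
      · norm_num at h
      · norm_num at h
    have hF' : ∀ x y, F x y = pinv f (T (f x) (f y)) := by
      intro x y
      rw [hF]
      simp only [pinvMono]
      rw [if_pos hmono]
    -- Phase 2 : f strictly increasing
    have hsm : StrictMonoOn f (Set.Icc (0:ℝ) 1) := by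
      intro u hu v hv huv
      rcases lt_or_eq_of_le (hmono hu hv huv.le) with h|h
      · exact h
      · exfalso
        have heq : F 1 u = F 1 v := by rw [hF', hF', h]
        rcases Fcanc 1 h1I u hu v hv heq with h'|h'
        · norm_num at h'
        · exact absurd h' (ne_of_lt huv)
    -- basic F facts
    have hFz0 : ∀ x ∈ Set.Icc (0:ℝ) 1, F x 0 = 0 := by
      intro x hx
      have h1 : F x 0 ≤ 0 := le_trans (Fmin x hx 0 h0I) (min_le_right x 0)
      exact le_antisymm h1 (Frange x hx 0 h0I).1
    have hFpos : ∀ x ∈ Set.Icc (0:ℝ) 1, ∀ y ∈ Set.Icc (0:ℝ) 1, 0 < x → 0 < y →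
        0 < F x y := by
      intro x hx y hy hx0 hy0
      have hge : F x 0 ≤ F x y := Fmono x hx 0 h0I y hy hy0.le
      rw [hFz0 x hx] at hge
      rcases lt_or_eq_of_le hge with h|h
      · exact h
      · exfalso
        have heq : F x y = F x 0 := by rw [hFz0 x hx, ← h]
        rcases Fcanc x hx y hy 0 h0I heq with h'|h'
        · exact absurd h' (ne_of_gt hx0)
        · exact absurd h' (ne_of_gt hy0)
    -- Phase 3 : f accumulates at 0, and f 0 = 0
    have hacc : ∀ ε, 0 < ε → ∃ u, u ∈ Set.Icc (0:ℝ) 1 ∧ 0 < u ∧ f u < ε := by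
      by_contra hcon
      push_neg at hcon
      obtain ⟨ε, hε, hεf⟩ := hcon
      have hIocsub : Set.Ioc (0:ℝ) 1 ⊆ Set.Icc (0:ℝ) 1 := Set.Ioc_subset_Icc_self
      have himgne : (f '' Set.Ioc (0:ℝ) 1).Nonempty := ⟨f 1, 1, ⟨one_pos, le_refl 1⟩, rfl⟩
      have hbdd : BddBelow (f '' Set.Ioc (0:ℝ) 1) := by
        refine ⟨0, ?_⟩
        rintro _ ⟨u, hu, rfl⟩
        exact (hmap u (hIocsub hu)).1
      set σ := sInf (f '' Set.Ioc (0:ℝ) 1) with hσdef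
      have hσle : ∀ u ∈ Set.Ioc (0:ℝ) 1, σ ≤ f u := fun u hu => csInf_le hbdd ⟨u, hu, rfl⟩
      have hσpos : 0 < σ := by
        refine lt_of_lt_of_le hε (le_csInf himgne ?_)
        rintro _ ⟨u, hu, rfl⟩
        exact hεf u (hIocsub hu) hu.1
      have hσlt1 : σ < 1 := by
        have h1 : σ ≤ f (1/2) := hσle (1/2) (by norm_num)
        have h2 : f (1/2) < f 1 := hsm hhI h1I (by norm_num)
        have h3 : f 1 ≤ 1 := (hmap 1 h1I).2
        linarith
      have hσI : σ ∈ Set.Icc (0:ℝ) 1 := ⟨hσpos.le, hσlt1.le⟩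
      have hTgt : ∀ u ∈ Set.Ioc (0:ℝ) 1, σ < T (f u) (f u) := by
        intro u hu
        have huI := hIocsub hu
        have hpos : 0 < F u u := hFpos u huI u huI hu.1 hu.1
        rw [hF'] at hpos
        obtain ⟨v, hvI, hv0, hvlt⟩ := aux_pinv_pos_elim hpos
        exact lt_of_le_of_lt (hσle v ⟨hv0, hvI.2⟩) hvlt
      have hseq : ∀ n : ℕ, ∃ u, u ∈ Set.Ioc (0:ℝ) 1 ∧ f u < σ + 1/(n+1) := by
        intro n
        have hpos : (0:ℝ) < 1/(n+1) := by positivity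
        obtain ⟨m, hm, hlt⟩ := exists_lt_of_csInf_lt himgne (lt_add_of_pos_right σ hpos)
        obtain ⟨u, hu, rfl⟩ := hm
        exact ⟨u, hu, hlt⟩
      choose u huIoc hult using hseq
      have hlow : ∀ n : ℕ, σ ≤ f (u n) := fun n => hσle (u n) (huIoc n)
      have htendsto : Filter.Tendsto (fun n : ℕ => f (u n)) Filter.atTop (nhds σ) := by
        have h1 : Filter.Tendsto (fun n : ℕ => σ + 1/((n:ℝ)+1)) Filter.atTop (nhds σ) := by
          have h2 := Filter.Tendsto.const_add σ tendsto_one_div_add_atTop_nhds_zero_nat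
          simpa using h2
        exact tendsto_of_tendsto_of_tendsto_of_le_of_le tendsto_const_nhds h1 hlow
          (fun n => (hult n).le)
      have hpair : Filter.Tendsto (fun n : ℕ => (f (u n), f (u n))) Filter.atTop
          (nhdsWithin (σ, σ) (Set.Icc (0:ℝ) 1 ×ˢ Set.Icc (0:ℝ) 1)) := by
        apply tendsto_nhdsWithin_of_tendsto_nhds_of_eventually_within
        · exact htendsto.prodMk_nhds htendsto
        · exact Filter.Eventually.of_forall
            (fun n => ⟨hmap _ (hIocsub (huIoc n)), hmap _ (hIocsub (huIoc n))⟩)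
      have hTlim : Filter.Tendsto (fun n : ℕ => T (f (u n)) (f (u n))) Filter.atTop
          (nhds (T σ σ)) :=
        Filter.Tendsto.comp (Tcont.continuousWithinAt (Set.mk_mem_prod hσI hσI)) hpair
      have hge : σ ≤ T σ σ :=
        ge_of_tendsto hTlim (Filter.Eventually.of_forall (fun n => (hTgt (u n) (huIoc n)).le))
      have hlt : T σ σ < σ := by
        have h := Tstrict σ hσI σ hσI 1 h1I hσpos hσlt1
        rwa [Tone σ hσI] at h
      linarith
    have hf0 : f 0 = 0 := by
      refine le_antisymm ?_ (hmap 0 h0I).1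
      by_contra h
      push_neg at h
      obtain ⟨v, hvI, hv0, hvlt⟩ := hacc (f 0) h
      exact absurd (hsm h0I hvI hv0) (not_lt.mpr hvlt.le)
    have hfposI : ∀ z ∈ Set.Icc (0:ℝ) 1, 0 < z → 0 < f z := by
      intro z hz hz0
      have h := hsm h0I hz hz0
      rwa [hf0] at h
    -- countability lemma : for each positive second coordinate, the set of first
    -- coordinates producing a value outside the range of f is countable
    have hCL : ∀ y ∈ Set.Icc (0:ℝ) 1, 0 < y →
        {z | z ∈ Set.Ioc (0:ℝ) 1 ∧ T (f z) (f y) ∉ f '' Set.Icc (0:ℝ) 1}.Countable := by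
      intro y hyI hy0
      set g : ℝ → ℝ := fun u => f (max 0 (min u 1)) with hgdef
      have hgmono : Monotone g := by
        intro a b hab
        exact hmono ⟨le_max_left 0 _, max_le zero_le_one (min_le_right a 1)⟩
          ⟨le_max_left 0 _, max_le zero_le_one (min_le_right b 1)⟩
          (max_le_max (le_refl 0) (min_le_min hab (le_refl 1)))
      have hgf : ∀ v ∈ Set.Icc (0:ℝ) 1, g v = f v := by
        intro v hv
        simp only [hgdef]
        rw [min_eq_left hv.2, max_eq_right hv.1]
      have hD : {v : ℝ | ¬ContinuousAt g v}.Countable := hgmono.countable_not_continuousAt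
      have hfy0 : 0 < f y := hfposI y hyI hy0
      apply Set.MapsTo.countable_of_injOn
        (t := {v : ℝ | ¬ContinuousAt g v}) (f := fun z => pinv f (T (f z) (f y))) ?_ ?_ hD
      -- MapsTo
      · intro z hz
        obtain ⟨hzIoc, hzM⟩ := hz
        have hzI := Set.Ioc_subset_Icc_self hzIoc
        have hfz0 : 0 < f z := hfposI z hzI hzIoc.1
        have hs0 : 0 < T (f z) (f y) := Tpos (f z) (hmap z hzI) (f y) (hmap y hyI) hfz0 hfy0
        have hsfy : T (f z) (f y) ≤ f y := TleR (f z) (hmap z hzI) (f y) (hmap y hyI)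
        have hsf1 : T (f z) (f y) ≤ f 1 := le_trans hsfy (hmono hyI h1I hyI.2)
        have hVI : pinv f (T (f z) (f y)) ∈ Set.Icc (0:ℝ) 1 := aux_pinv_mem
        have hV0 : 0 < pinv f (T (f z) (f y)) := by
          rcases lt_or_eq_of_le hVI.1 with h|h
          · exact h
          · exfalso
            obtain ⟨w', hw'I, hw'0, hw'lt⟩ := hacc (T (f z) (f y)) hs0
            have hge : T (f z) (f y) ≤ f w' := aux_le_f_of_pinv_lt hw'I (by rw [← h]; exact hw'0)
            linarith
        have hfVne : f (pinv f (T (f z) (f y))) ≠ T (f z) (f y) := by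
          intro h
          exact hzM ⟨pinv f (T (f z) (f y)), hVI, h⟩
        show ¬ContinuousAt g (pinv f (T (f z) (f y)))
        intro hcont
        rcases lt_or_gt_of_ne hfVne with hlt|hgt
        · -- f(pinv) < s : contradiction from the right
          have hgv : g (pinv f (T (f z) (f y))) < T (f z) (f y) := by
            rw [hgf _ hVI]; exact hlt
          have hev : ∀ᶠ u' in nhds (pinv f (T (f z) (f y))), g u' < T (f z) (f y) := by
            have h := hcont.preimage_mem_nhds (Iio_mem_nhds hgv)
            exact h
          have hev2 : ∀ᶠ u' in nhdsWithin (pinv f (T (f z) (f y)))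
              (Set.Ioi (pinv f (T (f z) (f y)))), g u' < T (f z) (f y) :=
            hev.filter_mono nhdsWithin_le_nhds
          obtain ⟨u', hu'lt, hu'Ioi⟩ := (hev2.and eventually_mem_nhdsWithin).exists
          have hge : T (f z) (f y) ≤ g u' := by
            by_cases hle : u' ≤ 1
            · have hu'I : u' ∈ Set.Icc (0:ℝ) 1 := ⟨le_trans hVI.1 (le_of_lt hu'Ioi), hle⟩
              rw [hgf u' hu'I]
              exact aux_le_f_of_pinv_lt hu'I hu'Ioi
            · push_neg at hle
              have hguf1 : g u' = f 1 := by
                simp only [hgdef]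
                rw [min_eq_right hle.le, max_eq_right zero_le_one]
              rw [hguf1]
              exact hsf1
          linarith
        · -- f(pinv) > s : contradiction from the left
          have hgv : T (f z) (f y) < g (pinv f (T (f z) (f y))) := by
            rw [hgf _ hVI]; exact hgt
          have hev : ∀ᶠ u' in nhds (pinv f (T (f z) (f y))), T (f z) (f y) < g u' := by
            have h := hcont.preimage_mem_nhds (Ioi_mem_nhds hgv)
            exact h
          have hev2 : ∀ᶠ u' in nhdsWithin (pinv f (T (f z) (f y)))
              (Set.Iio (pinv f (T (f z) (f y)))), T (f z) (f y) < g u' :=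
            hev.filter_mono nhdsWithin_le_nhds
          obtain ⟨u', hu'gt, hu'Iio⟩ := (hev2.and eventually_mem_nhdsWithin).exists
          have hlt' : g u' < T (f z) (f y) := by
            by_cases h0le : 0 ≤ u'
            · have hu'I : u' ∈ Set.Icc (0:ℝ) 1 := ⟨h0le, le_trans (le_of_lt hu'Iio) hVI.2⟩
              rw [hgf u' hu'I]
              exact aux_f_lt_of_lt_pinv hsm hu'I hu'Iio
            · push_neg at h0le
              have hgu0 : g u' = f 0 := by
                simp only [hgdef]
                rw [min_eq_left (le_trans h0le.le zero_le_one), max_eq_left h0le.le]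
              rw [hgu0, hf0]
              exact hs0
          linarith
      -- InjOn
      · intro z1 hz1 z2 hz2 heq
        have hz1I := Set.Ioc_subset_Icc_self hz1.1
        have hz2I := Set.Ioc_subset_Icc_self hz2.1
        have heqF : F y z1 = F y z2 := by
          rw [Fcomm y hyI z1 hz1I, Fcomm y hyI z2 hz2I, hF' z1 y, hF' z2 y]
          exact heq
        rcases Fcanc y hyI z1 hz1I z2 hz2I heqF with h|h
        · exact absurd h (ne_of_gt hy0)
        · exact h
    -- the interval (0,1] is not countable
    have hIocUnc : ¬ (Set.Ioc (0:ℝ) 1).Countable := by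
      intro h
      have hm := h.measure_zero MeasureTheory.volume
      rw [Real.volume_Ioc] at hm
      norm_num at hm
    -- Phase 4 : connectedness of the range under T
    have hclosed : ∀ x ∈ Set.Icc (0:ℝ) 1, ∀ y ∈ Set.Icc (0:ℝ) 1,
        T (f x) (f y) ∈ f '' Set.Icc (0:ℝ) 1 := by
      by_contra hcon
      push_neg at hcon
      obtain ⟨x, hxI, y, hyI, hbad⟩ := hcon
      have htI : T (f x) (f y) ∈ Set.Icc (0:ℝ) 1 := Trange (f x) (hmap x hxI) (f y) (hmap y hyI)
      have ht0 : 0 < T (f x) (f y) := by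
        rcases lt_or_eq_of_le htI.1 with h|h
        · exact h
        · exact absurd (⟨0, h0I, by rw [hf0]; exact h⟩ : T (f x) (f y) ∈ f '' Set.Icc (0:ℝ) 1)
            hbad
      have hx0 : 0 < x := by
        rcases lt_or_eq_of_le hxI.1 with h|h
        · exact h
        · exfalso
          have hfx : f x = 0 := by rw [← h, hf0]
          have hz : T (f x) (f y) = 0 := by
            rw [hfx, Tcomm 0 h0I (f y) (hmap y hyI)]
            exact TzeroR (f y) (hmap y hyI)
          linarith
      have hy0 : 0 < y := by
        rcases lt_or_eq_of_le hyI.1 with h|h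
        · exact h
        · exfalso
          have hfy : f y = 0 := by rw [← h, hf0]
          have hz : T (f x) (f y) = 0 := by
            rw [hfy]
            exact TzeroR (f x) (hmap x hxI)
          linarith
      have hfx0 : 0 < f x := hfposI x hxI hx0
      have hfy0 : 0 < f y := hfposI y hyI hy0
      have hwI : pinv f (T (f x) (f y)) ∈ Set.Icc (0:ℝ) 1 := aux_pinv_mem
      have hfwI : f (pinv f (T (f x) (f y))) ∈ Set.Icc (0:ℝ) 1 := hmap _ hwI
      have hfwne : f (pinv f (T (f x) (f y))) ≠ T (f x) (f y) := by
        intro h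
        exact hbad ⟨pinv f (T (f x) (f y)), hwI, h⟩
      -- key associativity consequence
      have hKA : ∀ z ∈ Set.Ioc (0:ℝ) 1, T (f z) (f y) ∈ f '' Set.Icc (0:ℝ) 1 →
          pinv f (T (f (pinv f (T (f x) (f y)))) (f z)) = pinv f (T (T (f x) (f y)) (f z)) := by
        intro z hzIoc hzM
        have hzI := Set.Ioc_subset_Icc_self hzIoc
        obtain ⟨u0, hu0I, hu0⟩ := hzM
        have hFyz : F y z = u0 := by
          rw [hF' y z, Tcomm (f y) (hmap y hyI) (f z) (hmap z hzI), ← hu0,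
            aux_pinv_f_eq hsm hu0I]
        have hFxy : F x y = pinv f (T (f x) (f y)) := hF' x y
        have hassoc := Fassoc x hxI y hyI z hzI
        rw [hFxy, hFyz, hF' (pinv f (T (f x) (f y))) z, hF' x u0] at hassoc
        rw [hassoc]
        have harg : T (f x) (f u0) = T (T (f x) (f y)) (f z) := by
          rw [hu0, Tcomm (f z) (hmap z hzI) (f y) (hmap y hyI)]
          exact (Tassoc (f x) (hmap x hxI) (f y) (hmap y hyI) (f z) (hmap z hzI)).symm
        rw [harg]
      -- general countability of "gap-detecting" sets
      have hGapCount : ∀ (c d : ℝ), c ∈ Set.Icc (0:ℝ) 1 → d ∈ Set.Icc (0:ℝ) 1 → 0 < c → c < d →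
          ∀ S : Set ℝ, S ⊆ Set.Ioc (0:ℝ) 1 →
          (∀ z ∈ S, pinv f (T c (f z)) = pinv f (T d (f z))) →
          (∀ z ∈ S, T c (f z) ∈ f '' Set.Icc (0:ℝ) 1) →
          S.Countable := by
        intro c d hcI hdI hc0 hcd S hSsub hSeq hSmem
        classical
        have hs12 : ∀ z ∈ S, T c (f z) < T d (f z) := by
          intro z hz
          have hzI := Set.Ioc_subset_Icc_self (hSsub hz)
          have hfz0 : 0 < f z := hfposI z hzI (hSsub hz).1
          have h := Tstrict (f z) (hmap z hzI) c hcI d hdI hfz0 hcd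
          rwa [Tcomm (f z) (hmap z hzI) c hcI, Tcomm (f z) (hmap z hzI) d hdI] at h
        -- the open interval (T c (f z), T d (f z)) contains no point of the range of f
        have hfree : ∀ z ∈ S, ∀ u' ∈ Set.Icc (0:ℝ) 1,
            ¬(T c (f z) < f u' ∧ f u' < T d (f z)) := by
          rintro z hz u' hu'I ⟨hm1, hm2⟩
          have hzI := Set.Ioc_subset_Icc_self (hSsub hz)
          have heqp := hSeq z hz
          have hu'eq := aux_pinv_sandwich hsm heqp hu'I hm1.le hm2
          obtain ⟨u1, hu1I, hu1⟩ := hSmem z hz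
          have hp1 : pinv f (T c (f z)) = u1 := by rw [← hu1, aux_pinv_f_eq hsm hu1I]
          rw [hp1] at hu'eq
          rw [hu'eq, hu1] at hm1
          exact lt_irrefl _ hm1
        -- pick rationals in the gaps
        have hchoice : ∀ z : ℝ, z ∈ S → ∃ q : ℚ, T c (f z) < (q:ℝ) ∧ (q:ℝ) < T d (f z) := by
          intro z hz
          exact exists_rat_btwn (hs12 z hz)
        have hQex : ∀ z : ℝ, ∃ q : ℚ, z ∈ S → T c (f z) < (q:ℝ) ∧ (q:ℝ) < T d (f z) := by
          intro z
          by_cases hz : z ∈ S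
          · obtain ⟨q, hq⟩ := hchoice z hz
            exact ⟨q, fun _ => hq⟩
          · exact ⟨0, fun h => absurd h hz⟩
        choose Q hQ using hQex
        have hkey : ∀ z1 ∈ S, ∀ z2 ∈ S, z1 < z2 → ((Q z1 : ℝ)) < ((Q z2 : ℝ)) := by
          intro z1 hz1 z2 hz2 hlt
          have hz1I := Set.Ioc_subset_Icc_self (hSsub hz1)
          have hz2I := Set.Ioc_subset_Icc_self (hSsub hz2)
          have h1 := hQ z1 hz1
          have h2 := hQ z2 hz2
          have hs1s1 : T c (f z1) < T c (f z2) :=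
            Tstrict c hcI (f z1) (hmap z1 hz1I) (f z2) (hmap z2 hz2I) hc0 (hsm hz1I hz2I hlt)
          have hTc2I : T c (f z2) ∈ f '' Set.Icc (0:ℝ) 1 := hSmem z2 hz2
          obtain ⟨u2, hu2I, hu2⟩ := hTc2I
          have hnotin := hfree z1 hz1 u2 hu2I
          rw [hu2] at hnotin
          have hge : T d (f z1) ≤ T c (f z2) := by
            by_contra hcc
            push_neg at hcc
            exact hnotin ⟨hs1s1, hcc⟩
          calc ((Q z1 : ℝ)) < T d (f z1) := h1.2
            _ ≤ T c (f z2) := hge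
            _ < ((Q z2 : ℝ)) := h2.1
        apply Set.MapsTo.countable_of_injOn
          (t := Set.range (fun q : ℚ => (q:ℝ))) (f := fun z => ((Q z : ℝ)))
        · intro z _
          exact ⟨Q z, rfl⟩
        · intro z1 hz1 z2 hz2 heq
          rcases lt_trichotomy z1 z2 with h|h|h
          · exact absurd heq (ne_of_lt (hkey z1 hz1 z2 hz2 h))
          · exact h
          · exact absurd heq.symm (ne_of_lt (hkey z2 hz2 z1 hz1 h))
        · exact Set.countable_range _
      -- now the two cases
      have hBady := hCL y hyI hy0
      rcases lt_or_gt_of_ne hfwne with hB|hA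
      · -- case B : f w < t
        rcases lt_or_eq_of_le hwI.1 with hw0|hw0
        · -- 0 < w
          have hfw0 : 0 < f (pinv f (T (f x) (f y))) := hfposI _ hwI hw0
          have hBadw := hCL (pinv f (T (f x) (f y))) hwI hw0
          have hGc : {z | z ∈ Set.Ioc (0:ℝ) 1 ∧ T (f z) (f y) ∈ f '' Set.Icc (0:ℝ) 1 ∧
              T (f z) (f (pinv f (T (f x) (f y)))) ∈ f '' Set.Icc (0:ℝ) 1}.Countable := by
            apply hGapCount (f (pinv f (T (f x) (f y)))) (T (f x) (f y)) hfwI htI hfw0 hB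
            · intro z hz
              exact hz.1
            · intro z hz
              exact hKA z hz.1 hz.2.1
            · intro z hz
              have hzI := Set.Ioc_subset_Icc_self hz.1
              rw [Tcomm (f (pinv f (T (f x) (f y)))) hfwI (f z) (hmap z hzI)]
              exact hz.2.2
          apply hIocUnc
          have hcover : Set.Ioc (0:ℝ) 1 ⊆
              ({z | z ∈ Set.Ioc (0:ℝ) 1 ∧ T (f z) (f y) ∉ f '' Set.Icc (0:ℝ) 1} ∪
               {z | z ∈ Set.Ioc (0:ℝ) 1 ∧
                  T (f z) (f (pinv f (T (f x) (f y)))) ∉ f '' Set.Icc (0:ℝ) 1}) ∪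
              {z | z ∈ Set.Ioc (0:ℝ) 1 ∧ T (f z) (f y) ∈ f '' Set.Icc (0:ℝ) 1 ∧
                  T (f z) (f (pinv f (T (f x) (f y)))) ∈ f '' Set.Icc (0:ℝ) 1} := by
            intro z hz
            by_cases h1 : T (f z) (f y) ∈ f '' Set.Icc (0:ℝ) 1
            · by_cases h2 : T (f z) (f (pinv f (T (f x) (f y)))) ∈ f '' Set.Icc (0:ℝ) 1
              · exact Or.inr ⟨hz, h1, h2⟩
              · exact Or.inl (Or.inr ⟨hz, h2⟩)
            · exact Or.inl (Or.inl ⟨hz, h1⟩)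
          exact Set.Countable.mono hcover ((hBady.union hBadw).union hGc)
        · -- w = 0 : immediate contradiction
          exfalso
          have hGoodne : ∃ z, z ∈ Set.Ioc (0:ℝ) 1 ∧
              T (f z) (f y) ∈ f '' Set.Icc (0:ℝ) 1 := by
            by_contra hcon2
            push_neg at hcon2
            apply hIocUnc
            refine Set.Countable.mono ?_ hBady
            intro z hz
            exact ⟨hz, hcon2 z hz⟩
          obtain ⟨z, hzIoc, hzM⟩ := hGoodne
          have hzI := Set.Ioc_subset_Icc_self hzIoc
          have hKAz := hKA z hzIoc hzM
          have hfweq : f (pinv f (T (f x) (f y))) = 0 := by rw [← hw0, hf0]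
          have hT0 : T (f (pinv f (T (f x) (f y)))) (f z) = 0 := by
            rw [hfweq, Tcomm 0 h0I (f z) (hmap z hzI)]
            exact TzeroR (f z) (hmap z hzI)
          have hp0 : pinv f (T (T (f x) (f y)) (f z)) = 0 := by
            rw [← hKAz, hT0]
            refine le_antisymm (Real.sSup_le ?_ (le_refl 0)) aux_pinv_nonneg
            rintro v ⟨hvI, hvlt⟩
            exact absurd hvlt (not_lt.mpr (hmap v hvI).1)
          have hfz0 : 0 < f z := hfposI z hzI hzIoc.1
          have htz0 : 0 < T (T (f x) (f y)) (f z) :=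
            Tpos (T (f x) (f y)) htI (f z) (hmap z hzI) ht0 hfz0
          obtain ⟨v', hv'I, hv'0, hv'lt⟩ := hacc (T (T (f x) (f y)) (f z)) htz0
          have hge : T (T (f x) (f y)) (f z) ≤ f v' :=
            aux_le_f_of_pinv_lt hv'I (by rw [hp0]; exact hv'0)
          linarith
      · -- case A : t < f w
        have hBadx := hCL x hxI hx0
        -- z good but T t (f z) not in range : inject into Bad x
        have hGN : {z | z ∈ Set.Ioc (0:ℝ) 1 ∧ T (f z) (f y) ∈ f '' Set.Icc (0:ℝ) 1 ∧
            T (T (f x) (f y)) (f z) ∉ f '' Set.Icc (0:ℝ) 1}.Countable := by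
          apply Set.MapsTo.countable_of_injOn
            (t := {z | z ∈ Set.Ioc (0:ℝ) 1 ∧ T (f z) (f x) ∉ f '' Set.Icc (0:ℝ) 1})
            (f := fun z => pinv f (T (f y) (f z))) ?_ ?_ hBadx
          · rintro z ⟨hzIoc, hzM, hznM⟩
            have hzI := Set.Ioc_subset_Icc_self hzIoc
            obtain ⟨u0, hu0I, hu0⟩ := hzM
            have hν : pinv f (T (f y) (f z)) = u0 := by
              rw [Tcomm (f y) (hmap y hyI) (f z) (hmap z hzI), ← hu0, aux_pinv_f_eq hsm hu0I]
            show pinv f (T (f y) (f z)) ∈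
              {z | z ∈ Set.Ioc (0:ℝ) 1 ∧ T (f z) (f x) ∉ f '' Set.Icc (0:ℝ) 1}
            rw [hν]
            have hfz0 : 0 < f z := hfposI z hzI hzIoc.1
            have hfu0pos : 0 < f u0 := by
              rw [hu0]
              exact Tpos (f z) (hmap z hzI) (f y) (hmap y hyI) hfz0 hfy0
            have hu00 : 0 < u0 := by
              rcases lt_or_eq_of_le hu0I.1 with h|h
              · exact h
              · exfalso
                rw [← h, hf0] at hfu0pos
                exact lt_irrefl _ hfu0pos
            refine ⟨⟨hu00, hu0I.2⟩, ?_⟩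
            have harg : T (f u0) (f x) = T (T (f x) (f y)) (f z) := by
              rw [hu0, Tcomm (T (f z) (f y)) (Trange (f z) (hmap z hzI) (f y) (hmap y hyI))
                (f x) (hmap x hxI)]
              rw [Tcomm (f z) (hmap z hzI) (f y) (hmap y hyI)]
              exact (Tassoc (f x) (hmap x hxI) (f y) (hmap y hyI) (f z) (hmap z hzI)).symm
            rw [harg]
            exact hznM
          · intro z1 hz1 z2 hz2 heq
            have hz1I := Set.Ioc_subset_Icc_self hz1.1
            have hz2I := Set.Ioc_subset_Icc_self hz2.1
            have heqF : F y z1 = F y z2 := by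
              rw [hF' y z1, hF' y z2]
              exact heq
            rcases Fcanc y hyI z1 hz1I z2 hz2I heqF with h|h
            · exact absurd h (ne_of_gt hy0)
            · exact h
        have hGM : {z | z ∈ Set.Ioc (0:ℝ) 1 ∧ T (f z) (f y) ∈ f '' Set.Icc (0:ℝ) 1 ∧
            T (T (f x) (f y)) (f z) ∈ f '' Set.Icc (0:ℝ) 1}.Countable := by
          apply hGapCount (T (f x) (f y)) (f (pinv f (T (f x) (f y)))) htI hfwI ht0 hA
          · intro z hz
            exact hz.1
          · intro z hz
            exact (hKA z hz.1 hz.2.1).symm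
          · intro z hz
            exact hz.2.2
        apply hIocUnc
        have hcover : Set.Ioc (0:ℝ) 1 ⊆
            ({z | z ∈ Set.Ioc (0:ℝ) 1 ∧ T (f z) (f y) ∉ f '' Set.Icc (0:ℝ) 1} ∪
             {z | z ∈ Set.Ioc (0:ℝ) 1 ∧ T (f z) (f y) ∈ f '' Set.Icc (0:ℝ) 1 ∧
                T (T (f x) (f y)) (f z) ∉ f '' Set.Icc (0:ℝ) 1}) ∪
            {z | z ∈ Set.Ioc (0:ℝ) 1 ∧ T (f z) (f y) ∈ f '' Set.Icc (0:ℝ) 1 ∧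
                T (T (f x) (f y)) (f z) ∈ f '' Set.Icc (0:ℝ) 1} := by
          intro z hz
          by_cases h1 : T (f z) (f y) ∈ f '' Set.Icc (0:ℝ) 1
          · by_cases h2 : T (T (f x) (f y)) (f z) ∈ f '' Set.Icc (0:ℝ) 1
            · exact Or.inr ⟨hz, h1, h2⟩
            · exact Or.inl (Or.inr ⟨hz, h1, h2⟩)
          · exact Or.inl (Or.inl ⟨hz, h1⟩)
        exact Set.Countable.mono hcover ((hBady.union hGN).union hGM)
    -- wrap up forward direction
    refine ⟨hsm, ?_⟩
    intro a ha b hb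
    rw [hM] at ha hb ⊢
    obtain ⟨x, hxI, rfl⟩ := ha
    obtain ⟨y, hyI, rfl⟩ := hb
    exact hclosed x hxI y hyI
  · rintro ⟨hsm, hclosed⟩
    have hmono : MonotoneOn f (Set.Icc (0:ℝ) 1) := hsm.monotoneOn
    have hF' : ∀ x y, F x y = pinv f (T (f x) (f y)) := by
      intro x y
      rw [hF]
      simp only [pinvMono]
      rw [if_pos hmono]
    have hmem : ∀ x ∈ Set.Icc (0:ℝ) 1, f x ∈ M := by
      intro x hx
      rw [hM]
      exact ⟨x, hx, rfl⟩
    have hwit : ∀ x ∈ Set.Icc (0:ℝ) 1, ∀ y ∈ Set.Icc (0:ℝ) 1,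
        F x y ∈ Set.Icc (0:ℝ) 1 ∧ f (F x y) = T (f x) (f y) := by
      intro x hx y hy
      have htM : T (f x) (f y) ∈ M := hclosed (f x) (hmem x hx) (f y) (hmem y hy)
      rw [hM] at htM
      obtain ⟨z, hzI, hz⟩ := htM
      have hFz : F x y = z := by rw [hF', ← hz, aux_pinv_f_eq hsm hzI]
      rw [hFz]
      exact ⟨hzI, hz⟩
    constructor
    · refine ⟨?_, ?_, ?_, ?_, ?_⟩
      · intro x hx y hy
        exact (hwit x hx y hy).1
      · intro x hx y hy
        rw [hF', hF', Tcomm (f x) (hmap x hx) (f y) (hmap y hy)]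
      · intro x hx y hy z hz
        have h1 := hwit x hx y hy
        have h2 := hwit y hy z hz
        rw [hF' (F x y) z, hF' x (F y z), h1.2, h2.2,
          Tassoc (f x) (hmap x hx) (f y) (hmap y hy) (f z) (hmap z hz)]
      · intro x hx y hy z hz hyz
        rw [hF' x y, hF' x z]
        exact aux_pinv_mono (Tmono (f x) (hmap x hx) (f y) (hmap y hy) (f z) (hmap z hz)
          (hmono hy hz hyz))
      · intro x hx y hy
        have h1 := hwit x hx y hy
        have hle1 : f (F x y) ≤ f x := by
          rw [h1.2]
          exact TleL (f x) (hmap x hx) (f y) (hmap y hy)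
        have hle2 : f (F x y) ≤ f y := by
          rw [h1.2]
          exact TleR (f x) (hmap x hx) (f y) (hmap y hy)
        have hx' : F x y ≤ x := by
          by_contra hc
          push_neg at hc
          exact absurd (hsm hx h1.1 hc) (not_lt.mpr hle1)
        have hy' : F x y ≤ y := by
          by_contra hc
          push_neg at hc
          exact absurd (hsm hy h1.1 hc) (not_lt.mpr hle2)
        exact le_min hx' hy'
    · intro x hx y hy z hz heq
      by_cases hx0 : x = 0
      · exact Or.inl hx0
      · right
        have hx0' : 0 < x := lt_of_le_of_ne hx.1 (Ne.symm hx0)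
        have h0I' : (0:ℝ) ∈ Set.Icc (0:ℝ) 1 := ⟨le_refl 0, zero_le_one⟩
        have hfx0 : 0 < f x := lt_of_le_of_lt (hmap 0 h0I').1 (hsm h0I' hx hx0')
        have h1 := hwit x hx y hy
        have h2 := hwit x hx z hz
        have hTeq : T (f x) (f y) = T (f x) (f z) := by
          rw [← h1.2, ← h2.2, heq]
        have hfyz : f y = f z :=
          Tcancel (f x) (hmap x hx) (f y) (hmap y hy) (f z) (hmap z hz) hfx0 hTeq
        by_contra hne
        rcases lt_or_gt_of_ne hne with h|h
        · exact absurd hfyz (ne_of_lt (hsm hy hz h))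
        · exact absurd hfyz.symm (ne_of_lt (hsm hz hy h))
end

section
/- Let T be a strict t-norm and f : [0,1] → [0,1] a strictly increasing continuous function with f(0) = 0. Then the function F(x,y) = f^{(-1)}(T(f(x),f(y))) is a cancellative t-subnorm. -/
theorem strictMono_continuous_gives_cancellative_tsubnorm (T : ℝ → ℝ → ℝ) (f : ℝ → ℝ)
    (hT : IsStrictTNorm T)
    (hmap : ∀ x ∈ Set.Icc (0:ℝ) 1, f x ∈ Set.Icc (0:ℝ) 1)
    (hf : StrictMonoOn f (Set.Icc (0:ℝ) 1))
    (hcont : ContinuousOn f (Set.Icc (0:ℝ) 1))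
    (h0 : f 0 = 0) :
    IsTSubnorm (fun x y => pinv f (T (f x) (f y))) ∧
      Cancellative (fun x y => pinv f (T (f x) (f y))) := by
  obtain ⟨⟨hrange, hcomm, hassoc, hmono, hone⟩, _hc, hstrict⟩ := hT
  have h01 : (0:ℝ) ∈ Set.Icc (0:ℝ) 1 := by norm_num
  have h11 : (1:ℝ) ∈ Set.Icc (0:ℝ) 1 := by norm_num
  -- key: for t in [0, f 1], pinv f t ∈ [0,1] and f (pinv f t) = t
  have key : ∀ t, 0 ≤ t → t ≤ f 1 → pinv f t ∈ Set.Icc (0:ℝ) 1 ∧ f (pinv f t) = t := by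
    intro t ht0 ht1
    rcases eq_or_lt_of_le ht0 with h | h
    · have hempty : {x | x ∈ Set.Icc (0:ℝ) 1 ∧ f x < t} = ∅ := by
        ext x; simp only [Set.mem_setOf_eq, Set.mem_empty_iff_false, iff_false, not_and]
        intro hx; rw [← h]; exact not_lt.2 (hmap x hx).1
      have : pinv f t = 0 := by rw [pinv, hempty, Real.sSup_empty]
      rw [this]; exact ⟨h01, by rw [h0, h]⟩
    · obtain ⟨c, hc, hfc⟩ := intermediate_value_Icc (by norm_num : (0:ℝ) ≤ 1) hcont
        (by rw [h0]; exact ⟨ht0, ht1⟩ : t ∈ Set.Icc (f 0) (f 1))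
      have hc0 : 0 < c := by
        rcases (lt_or_eq_of_le hc.1).symm with h' | h'
        · exfalso; rw [← h', h0] at hfc; exact absurd hfc.symm (ne_of_gt h)
        · exact h'
      have hset : {x | x ∈ Set.Icc (0:ℝ) 1 ∧ f x < t} = Set.Ico 0 c := by
        ext x
        simp only [Set.mem_setOf_eq, Set.mem_Ico]
        constructor
        · rintro ⟨hx, hfx⟩
          refine ⟨hx.1, ?_⟩
          by_contra hxc
          push_neg at hxc
          have : f c ≤ f x := (hf.le_iff_le hc hx).2 hxc
          rw [hfc] at this; linarith
        · rintro ⟨hx0, hxc⟩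
          have hx : x ∈ Set.Icc (0:ℝ) 1 := ⟨hx0, le_trans (le_of_lt hxc) hc.2⟩
          refine ⟨hx, ?_⟩
          have := hf hx hc hxc
          rw [hfc] at this; exact this
      have hp : pinv f t = c := by rw [pinv, hset, csSup_Ico hc0]
      rw [hp]; exact ⟨hc, hfc⟩
  have hle1 : ∀ x ∈ Set.Icc (0:ℝ) 1, f x ≤ f 1 := fun x hx =>
    hf.monotoneOn hx h11 hx.2
  have hTle : ∀ a ∈ Set.Icc (0:ℝ) 1, ∀ b ∈ Set.Icc (0:ℝ) 1, T a b ≤ a := by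
    intro a ha b hb
    calc T a b ≤ T a 1 := hmono a ha b hb 1 h11 hb.2
    _ = a := hone a ha
  have harg : ∀ x ∈ Set.Icc (0:ℝ) 1, ∀ y ∈ Set.Icc (0:ℝ) 1,
      0 ≤ T (f x) (f y) ∧ T (f x) (f y) ≤ f 1 := by
    intro x hx y hy
    exact ⟨(hrange _ (hmap x hx) _ (hmap y hy)).1,
      le_trans (hTle _ (hmap x hx) _ (hmap y hy)) (hle1 x hx)⟩
  -- F value facts
  have hFmem : ∀ x ∈ Set.Icc (0:ℝ) 1, ∀ y ∈ Set.Icc (0:ℝ) 1,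
      pinv f (T (f x) (f y)) ∈ Set.Icc (0:ℝ) 1 := by
    intro x hx y hy
    exact (key _ (harg x hx y hy).1 (harg x hx y hy).2).1
  have hFval : ∀ x ∈ Set.Icc (0:ℝ) 1, ∀ y ∈ Set.Icc (0:ℝ) 1,
      f (pinv f (T (f x) (f y))) = T (f x) (f y) := by
    intro x hx y hy
    exact (key _ (harg x hx y hy).1 (harg x hx y hy).2).2
  constructor
  · refine ⟨hFmem, ?_, ?_, ?_, ?_⟩
    · intro x hx y hy
      simp only
      rw [hcomm _ (hmap x hx) _ (hmap y hy)]
    · intro x hx y hy z hz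
      simp only
      rw [hFval x hx y hy, hFval y hy z hz,
        hassoc _ (hmap x hx) _ (hmap y hy) _ (hmap z hz)]
    · intro x hx y hy z hz hyz
      simp only
      have h1 : T (f x) (f y) ≤ T (f x) (f z) :=
        hmono _ (hmap x hx) _ (hmap y hy) _ (hmap z hz) (hf.monotoneOn hy hz hyz)
      have := hFval x hx y hy
      have h2 := hFval x hx z hz
      by_contra hlt
      push_neg at hlt
      have := hf (hFmem x hx z hz) (hFmem x hx y hy) hlt
      rw [hFval x hx y hy, hFval x hx z hz] at this
      linarith
    · intro x hx y hy
      simp only [le_min_iff]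
      constructor
      · by_contra hlt
        push_neg at hlt
        have := hf hx (hFmem x hx y hy) hlt
        rw [hFval x hx y hy] at this
        exact absurd this (not_lt.2 (hTle _ (hmap x hx) _ (hmap y hy)))
      · by_contra hlt
        push_neg at hlt
        have := hf hy (hFmem x hx y hy) hlt
        rw [hFval x hx y hy, hcomm _ (hmap x hx) _ (hmap y hy)] at this
        exact absurd this (not_lt.2 (hTle _ (hmap y hy) _ (hmap x hx)))
  · intro x hx y hy z hz heq
    simp only at heq
    by_cases hx0 : x = 0
    · exact Or.inl hx0
    right
    have hxpos : 0 < x := lt_of_le_of_ne hx.1 (Ne.symm hx0)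
    have hfx : 0 < f x := by rw [← h0]; exact hf h01 hx hxpos
    have hT' : T (f x) (f y) = T (f x) (f z) := by
      have := congrArg f heq
      rwa [hFval x hx y hy, hFval x hx z hz] at this
    rcases lt_trichotomy y z with h | h | h
    · exfalso
      have := hstrict _ (hmap x hx) _ (hmap y hy) _ (hmap z hz) hfx (hf hy hz h)
      linarith
    · exact h
    · exfalso
      have := hstrict _ (hmap x hx) _ (hmap z hz) _ (hmap y hy) hfx (hf hz hy h)
      linarith
end

section
/- Let T be a strict t-norm, f : [0,1] → [0,1] non-decreasing with range M, and F(x,y) = f^{(-1)}(T(f(x),f(y))). Let Q = {w : there exist x ≠ y with f(x) = f(y) = w}. If f(1) ∈ Q, then F is a conditionally cancellative t-subnorm if and only if F(x,y) = 0 for all (x,y) ∈ [0,1]². -/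
theorem f1_in_Q_case (T : ℝ → ℝ → ℝ) (f : ℝ → ℝ)
    (hT : IsStrictTNorm T)
    (hmap : ∀ x ∈ Set.Icc (0:ℝ) 1, f x ∈ Set.Icc (0:ℝ) 1)
    (hf : MonotoneOn f (Set.Icc (0:ℝ) 1))
    (Q : Set ℝ)
    (hQ : Q = {w | ∃ x ∈ Set.Icc (0:ℝ) 1, ∃ y ∈ Set.Icc (0:ℝ) 1,
      x ≠ y ∧ f x = w ∧ f y = w})
    (h1 : f 1 ∈ Q)
    (F : ℝ → ℝ → ℝ) (hF : ∀ x y, F x y = pinv f (T (f x) (f y))) :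
    (IsTSubnorm F ∧ CondCancellative F) ↔
      ∀ x ∈ Set.Icc (0:ℝ) 1, ∀ y ∈ Set.Icc (0:ℝ) 1, F x y = 0 := by
  constructor
  · rintro ⟨⟨hrange, _, _, hmono, _⟩, hcc⟩
    rw [hQ] at h1
    obtain ⟨a, ha, b, hb, hab, hfa, hfb⟩ := h1
    intro x hx y hy
    have heq : F x a = F x b := by rw [hF, hF, hfa, hfb]
    have hFa : F x a = 0 := by
      by_contra h
      exact hab (hcc x hx a ha b hb heq
        (lt_of_le_of_ne (hrange x hx a ha).1 (Ne.symm h)))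
    have h1' : F x 1 = F x a := by rw [hF, hF, hfa]
    have hm := hmono x hx y hy 1 ⟨zero_le_one, le_refl 1⟩ hy.2
    have h0 := (hrange x hx y hy).1
    linarith
  · intro hz
    have h01 : (0:ℝ) ∈ Set.Icc (0:ℝ) 1 := ⟨le_refl 0, zero_le_one⟩
    refine ⟨⟨fun x hx y hy => by rw [hz x hx y hy]; exact h01,
      fun x hx y hy => by rw [hz x hx y hy, hz y hy x hx],
      fun x hx y hy z hzz => by
        rw [hz x hx y hy, hz y hy z hzz, hz 0 h01 z hzz, hz x hx 0 h01],
      fun x hx y hy z hzz _ => by rw [hz x hx y hy, hz x hx z hzz],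
      fun x hx y hy => by rw [hz x hx y hy]; exact le_min hx.1 hy.1⟩,
      fun x hx y hy z hzz _ hpos => by
        rw [hz x hx y hy] at hpos; exact absurd hpos (lt_irrefl 0)⟩
end

section
/- Let T be a strict t-norm, f : [0,1] → [0,1] non-decreasing with range M, F(x,y) = f^{(-1)}(T(f(x),f(y))), and Q = {w : ∃ x ≠ y with f(x) = f(y) = w}. If lim_{x→1⁻} f(x) ∈ Q but f(1) ∉ Q, then F is a conditionally cancellative t-subnorm if and only if there exists a ∈ [0,1] such that F(1,1) = a and F(x,y) = 0 whenever (x,y) ≠ (1,1). -/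
theorem f1minus_in_Q_case (T : ℝ → ℝ → ℝ) (f : ℝ → ℝ)
    (hT : IsStrictTNorm T)
    (hmap : ∀ x ∈ Set.Icc (0:ℝ) 1, f x ∈ Set.Icc (0:ℝ) 1)
    (hf : MonotoneOn f (Set.Icc (0:ℝ) 1))
    (Q : Set ℝ)
    (hQ : Q = {w | ∃ x ∈ Set.Icc (0:ℝ) 1, ∃ y ∈ Set.Icc (0:ℝ) 1,
      x ≠ y ∧ f x = w ∧ f y = w})
    -- `f(1⁻) = sup f([0,1))` is the left limit of the non-decreasing `f` at 1
    (h1m : sSup (f '' Set.Ico (0:ℝ) 1) ∈ Q)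
    (h1 : f 1 ∉ Q)
    (F : ℝ → ℝ → ℝ) (hF : ∀ x y, F x y = pinv f (T (f x) (f y))) :
    (IsTSubnorm F ∧ CondCancellative F) ↔
      ∃ a ∈ Set.Icc (0:ℝ) 1, F 1 1 = a ∧
        ∀ x ∈ Set.Icc (0:ℝ) 1, ∀ y ∈ Set.Icc (0:ℝ) 1,
          ¬(x = 1 ∧ y = 1) → F x y = 0 := by

  have h01 : (0:ℝ) ∈ Set.Icc (0:ℝ) 1 := ⟨le_rfl, zero_le_one⟩
  have h11 : (1:ℝ) ∈ Set.Icc (0:ℝ) 1 := ⟨zero_le_one, le_rfl⟩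
  constructor
  · rintro ⟨hSub, hCC⟩
    obtain ⟨⟨hTbd, hTcomm, hTassoc, hTmono, hTone⟩, hTcont, hTstrict⟩ := hT
    set c := sSup (f '' Set.Ico (0:ℝ) 1) with hc
    have hne : (f '' Set.Ico (0:ℝ) 1).Nonempty := ⟨f 0, 0, ⟨le_rfl, zero_lt_one⟩, rfl⟩
    have hbdd : BddAbove (f '' Set.Ico (0:ℝ) 1) := by
      refine ⟨1, ?_⟩
      rintro w ⟨t, ht, rfl⟩
      exact (hmap t ⟨ht.1, ht.2.le⟩).2
    have hc1 : c ≤ 1 := csSup_le hne (by rintro w ⟨t, ht, rfl⟩; exact (hmap t ⟨ht.1, ht.2.le⟩).2)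
    have hc0 : 0 ≤ c :=
      le_trans (hmap 0 h01).1 (le_csSup hbdd ⟨0, ⟨le_rfl, zero_lt_one⟩, rfl⟩)
    have hcmem : c ∈ Set.Icc (0:ℝ) 1 := ⟨hc0, hc1⟩
    have hyc : ∀ y ∈ Set.Icc (0:ℝ) 1, y ≠ 1 → f y ≤ c := by
      intro y hy hy1
      exact le_csSup hbdd ⟨y, ⟨hy.1, lt_of_le_of_ne hy.2 hy1⟩, rfl⟩
    rw [hQ] at h1m
    obtain ⟨x₁, hx₁, y₁, hy₁, hne', hfx₁, hfy₁⟩ := h1m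
    have hEq : F 1 x₁ = F 1 y₁ := by rw [hF, hF, hfx₁, hfy₁]
    have hnn : ∀ u v : ℝ, 0 ≤ F u v := by
      intro u v
      rw [hF]
      exact Real.sSup_nonneg (fun t ht => ht.1.1)
    have hz : F 1 x₁ = 0 := by
      by_contra h
      exact hne' (hCC 1 h11 x₁ hx₁ y₁ hy₁ hEq (lt_of_le_of_ne (hnn 1 x₁) (Ne.symm h)))
    have key : ∀ t ∈ Set.Icc (0:ℝ) 1, 0 < t → T (f 1) c ≤ f t := by
      intro t ht htpos
      by_contra h
      push_neg at h
      have hle : t ≤ F 1 x₁ := by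
        rw [hF, hfx₁]
        exact le_csSup ⟨1, fun s hs => hs.1.2⟩ ⟨ht, h⟩
      rw [hz] at hle
      linarith
    refine ⟨F 1 1, hSub.1 1 h11 1 h11, rfl, ?_⟩
    intro x hx y hy hxy
    have hfx := hmap x hx
    have hfy := hmap y hy
    have hf1 := hmap 1 h11
    have hbound : T (f x) (f y) ≤ T (f 1) c := by
      rcases not_and_or.mp hxy with h | h
      · calc T (f x) (f y) = T (f y) (f x) := hTcomm _ hfx _ hfy
          _ ≤ T (f y) c := hTmono _ hfy _ hfx _ hcmem (hyc x hx h)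
          _ = T c (f y) := hTcomm _ hfy _ hcmem
          _ ≤ T c (f 1) := hTmono _ hcmem _ hfy _ hf1 (hf hy h11 hy.2)
          _ = T (f 1) c := hTcomm _ hcmem _ hf1
      · calc T (f x) (f y) ≤ T (f x) c := hTmono _ hfx _ hfy _ hcmem (hyc y hy h)
          _ = T c (f x) := hTcomm _ hfx _ hcmem
          _ ≤ T c (f 1) := hTmono _ hcmem _ hfx _ hf1 (hf hx h11 hx.2)
          _ = T (f 1) c := hTcomm _ hcmem _ hf1
    rw [hF]
    unfold pinv
    apply le_antisymm
    · apply Real.sSup_le _ le_rfl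
      intro t ht
      by_contra hcon
      push_neg at hcon
      exact absurd ht.2 (not_lt.mpr (le_trans hbound (key t ht.1 hcon)))
    · exact Real.sSup_nonneg (fun t ht => ht.1.1)
  · rintro ⟨a, ha, hFa, hzero⟩
    have hbd : ∀ x ∈ Set.Icc (0:ℝ) 1, ∀ y ∈ Set.Icc (0:ℝ) 1, F x y ∈ Set.Icc (0:ℝ) 1 := by
      intro x hx y hy
      by_cases h : x = 1 ∧ y = 1
      · rw [h.1, h.2, hFa]; exact ha
      · rw [hzero x hx y hy h]; exact h01
    refine ⟨⟨hbd, ?_, ?_, ?_, ?_⟩, ?_⟩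
    · intro x hx y hy
      by_cases h : x = 1 ∧ y = 1
      · rw [h.1, h.2]
      · rw [hzero x hx y hy h, hzero y hy x hx (fun h' => h ⟨h'.2, h'.1⟩)]
    · intro x hx y hy z hz
      by_cases hall : x = 1 ∧ y = 1 ∧ z = 1
      · obtain ⟨rfl, rfl, rfl⟩ := hall
        rw [hFa]
        by_cases haa : a = 1
        · rw [haa]
        · rw [hzero a ha 1 h11 (fun h' => haa h'.1), hzero 1 h11 a ha (fun h' => haa h'.2)]
      · have hLHS : F (F x y) z = 0 := by
          apply hzero _ (hbd x hx y hy) z hz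
          rintro ⟨hq, hz1⟩
          have hxy : ¬(x = 1 ∧ y = 1) := fun h' => hall ⟨h'.1, h'.2, hz1⟩
          rw [hzero x hx y hy hxy] at hq
          exact one_ne_zero hq.symm
        have hRHS : F x (F y z) = 0 := by
          apply hzero x hx _ (hbd y hy z hz)
          rintro ⟨hx1, hq⟩
          have hyz : ¬(y = 1 ∧ z = 1) := fun h' => hall ⟨hx1, h'.1, h'.2⟩
          rw [hzero y hy z hz hyz] at hq
          exact one_ne_zero hq.symm
        rw [hLHS, hRHS]
    · intro x hx y hy z hz hyz
      by_cases h : x = 1 ∧ y = 1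
      · have hz1 : z = 1 := le_antisymm hz.2 (h.2 ▸ hyz)
        rw [h.1, h.2, hz1]
      · rw [hzero x hx y hy h]
        exact (hbd x hx z hz).1
    · intro x hx y hy
      by_cases h : x = 1 ∧ y = 1
      · rw [h.1, h.2, hFa]
        simpa using ha.2
      · rw [hzero x hx y hy h]
        exact le_min hx.1 hy.1
    · intro x hx y hy z hz heq hpos
      have h1' : x = 1 ∧ y = 1 := by
        by_contra h
        rw [hzero x hx y hy h] at hpos
        exact lt_irrefl 0 hpos
      have h2' : x = 1 ∧ z = 1 := by
        by_contra h
        rw [heq, hzero x hx z hz h] at hpos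
        exact lt_irrefl 0 hpos
      rw [h1'.2, h2'.2]
end

section
/- Define f : [0,1] → [0,1] by f(x) = 1/2 for x ∈ [0,1/2] and f(x) = x for x ∈ (1/2,1], and let T(x,y) = xy. Then F(x,y) = f^{(-1)}(T(f(x),f(y))) equals 0 if 0 < xy ≤ 1/2 and xy if xy > 1/2 or xy = 0, and F is a conditionally cancellative t-subnorm. -/
lemma pinv_of_le_half (f : ℝ → ℝ) (hfdef : ∀ x : ℝ, f x = if x ≤ 1/2 then 1/2 else x)
    {z : ℝ} (hz : z ≤ 1/2) : pinv f z = 0 := by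
  have hset : {x | x ∈ Set.Icc (0:ℝ) 1 ∧ f x < z} = ∅ := by
    ext x
    simp only [Set.mem_setOf_eq, Set.mem_empty_iff_false, iff_false, not_and, Set.mem_Icc]
    rintro ⟨h0, h1⟩ hlt
    rw [hfdef] at hlt
    split_ifs at hlt <;> linarith
  rw [pinv, hset, Real.sSup_empty]

lemma pinv_of_gt_half (f : ℝ → ℝ) (hfdef : ∀ x : ℝ, f x = if x ≤ 1/2 then 1/2 else x)
    {z : ℝ} (hz1 : 1/2 < z) (hz2 : z ≤ 1) : pinv f z = z := by
  have hset : {x | x ∈ Set.Icc (0:ℝ) 1 ∧ f x < z} = Set.Ico 0 z := by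
    ext x
    simp only [Set.mem_setOf_eq, Set.mem_Icc, Set.mem_Ico]
    constructor
    · rintro ⟨⟨h0, h1⟩, hlt⟩
      rw [hfdef] at hlt
      split_ifs at hlt <;> exact ⟨h0, by linarith⟩
    · rintro ⟨h0, hlt⟩
      rw [hfdef]
      split_ifs with h <;> exact ⟨⟨h0, by linarith⟩, by linarith⟩
  rw [pinv, hset, csSup_Ico (by linarith : (0:ℝ) < z)]

theorem example_condCancellative_tsubnorm (T : ℝ → ℝ → ℝ) (f : ℝ → ℝ)
    (hTdef : ∀ x y : ℝ, T x y = x * y)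
    (hfdef : ∀ x : ℝ, f x = if x ≤ 1/2 then 1/2 else x)
    (F : ℝ → ℝ → ℝ) (hF : ∀ x y, F x y = pinv f (T (f x) (f y))) :
    (∀ x ∈ Set.Icc (0:ℝ) 1, ∀ y ∈ Set.Icc (0:ℝ) 1,
      F x y = if 0 < x * y ∧ x * y ≤ 1/2 then 0 else x * y) ∧
    IsTSubnorm F ∧ CondCancellative F := by
  have key : ∀ x ∈ Set.Icc (0:ℝ) 1, ∀ y ∈ Set.Icc (0:ℝ) 1,
      F x y = if x * y ≤ 1/2 then 0 else x * y := by
    intro x hx y hy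
    obtain ⟨hx0, hx1⟩ := hx
    obtain ⟨hy0, hy1⟩ := hy
    rw [hF, hTdef]
    rcases le_or_gt x (1/2) with hx2 | hx2 <;> rcases le_or_gt y (1/2) with hy2 | hy2
    · rw [hfdef x, hfdef y, if_pos hx2, if_pos hy2,
        pinv_of_le_half f hfdef (by norm_num), if_pos (by nlinarith)]
    · rw [hfdef x, hfdef y, if_pos hx2, if_neg (not_le.mpr hy2),
        pinv_of_le_half f hfdef (by nlinarith), if_pos (by nlinarith)]
    · rw [hfdef x, hfdef y, if_neg (not_le.mpr hx2), if_pos hy2,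
        pinv_of_le_half f hfdef (by nlinarith), if_pos (by nlinarith)]
    · rw [hfdef x, hfdef y, if_neg (not_le.mpr hx2), if_neg (not_le.mpr hy2)]
      rcases le_or_gt (x * y) (1/2) with h | h
      · rw [pinv_of_le_half f hfdef h, if_pos h]
      · rw [pinv_of_gt_half f hfdef h (by nlinarith), if_neg (not_le.mpr h)]
  have hbd : ∀ x ∈ Set.Icc (0:ℝ) 1, ∀ y ∈ Set.Icc (0:ℝ) 1, F x y ∈ Set.Icc (0:ℝ) 1 := by
    intro x hx y hy
    rw [key x hx y hy]
    obtain ⟨hx0, hx1⟩ := hx; obtain ⟨hy0, hy1⟩ := hy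
    split_ifs with h
    · exact ⟨le_refl 0, by norm_num⟩
    · exact ⟨by nlinarith, by nlinarith⟩
  refine ⟨?_, ⟨hbd, ?_, ?_, ?_, ?_⟩, ?_⟩
  · intro x hx y hy
    rw [key x hx y hy]
    rcases le_or_gt (x * y) (1/2) with h | h
    · rw [if_pos h]
      rcases lt_or_ge 0 (x * y) with h0 | h0
      · rw [if_pos ⟨h0, h⟩]
      · rw [if_neg (fun hc => absurd hc.1 (not_lt.mpr h0))]
        exact (le_antisymm h0 (mul_nonneg hx.1 hy.1)).symm
    · rw [if_neg (not_le.mpr h), if_neg (by push_neg; intro; linarith)]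
  · intro x hx y hy
    rw [key x hx y hy, key y hy x hx, mul_comm]
  · intro x hx y hy z hz
    have hx0 := hx.1; have hx1 := hx.2; have hy0 := hy.1; have hy1 := hy.2
    have hz0 := hz.1; have hz1 := hz.2
    rw [key (F x y) (hbd x hx y hy) z hz, key x hx (F y z) (hbd y hy z hz),
        key x hx y hy, key y hy z hz]
    rcases le_or_gt (x * y) (1/2) with hA | hA <;>
      rcases le_or_gt (y * z) (1/2) with hB | hB
    · rw [if_pos hA, if_pos hB]
      norm_num
    · rw [if_pos hA, if_neg (not_le.mpr hB),
        if_pos (by norm_num : (0:ℝ) * z ≤ 1/2),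
        if_pos (show x * (y * z) ≤ 1/2 by nlinarith [mul_nonneg hy0 hz0])]
    · rw [if_neg (not_le.mpr hA), if_pos hB,
        if_pos (by nlinarith [mul_nonneg hx0 hy0] : x * y * z ≤ 1/2),
        if_pos (by nlinarith : x * (0:ℝ) ≤ 1/2)]
    · rw [if_neg (not_le.mpr hA), if_neg (not_le.mpr hB), mul_assoc]
  · intro x hx y hy z hz hyz
    obtain ⟨hx0, hx1⟩ := hx; obtain ⟨hy0, hy1⟩ := hy; obtain ⟨hz0, hz1⟩ := hz
    rw [key x ⟨hx0, hx1⟩ y ⟨hy0, hy1⟩, key x ⟨hx0, hx1⟩ z ⟨hz0, hz1⟩]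
    have hm : x * y ≤ x * z := mul_le_mul_of_nonneg_left hyz hx0
    split_ifs <;> nlinarith
  · intro x hx y hy
    obtain ⟨hx0, hx1⟩ := hx; obtain ⟨hy0, hy1⟩ := hy
    rw [key x ⟨hx0, hx1⟩ y ⟨hy0, hy1⟩]
    split_ifs with h
    · exact le_min hx0 hy0
    · exact le_min (by nlinarith) (by nlinarith)
  · intro x hx y hy z hz heq hpos
    obtain ⟨hx0, hx1⟩ := hx; obtain ⟨hy0, hy1⟩ := hy; obtain ⟨hz0, hz1⟩ := hz
    rw [key x ⟨hx0, hx1⟩ y ⟨hy0, hy1⟩] at heq hpos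
    rw [key x ⟨hx0, hx1⟩ z ⟨hz0, hz1⟩] at heq
    split_ifs at heq hpos with h1 h2 h2
    · linarith
    · linarith
    · linarith
    · have hx0' : (0:ℝ) < x := by nlinarith
      exact mul_left_cancel₀ (ne_of_gt hx0') heq
end

section
/- Let f : [0,1] → [0,1] be strictly increasing with range M, and suppose [0,1] \ M is the union of a countable non-empty family of closed intervals [b_k, d_k] of positive length minus the chosen points c_k, where each c_k ∈ M ∩ [b_k,d_k] is an endpoint of [b_k,d_k]. Then for all x,y ∈ [0,1]: f^{(-1)}(x) = f^{(-1)}(y) if and only if the open interval (min(x,y), max(x,y)) contains no point of M other than the points c_k, i.e., (min(x,y), max(x,y)) ∩ (M \ C) = ∅, where C = {c_k}. -/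
namespace PinvAux

lemma bddAbove_S (f : ℝ → ℝ) (x : ℝ) :
    BddAbove {u | u ∈ Set.Icc (0:ℝ) 1 ∧ f u < x} :=
  ⟨1, fun _ hu => hu.1.2⟩

lemma pinv_nonneg (f : ℝ → ℝ) (x : ℝ) : 0 ≤ pinv f x :=
  Real.sSup_nonneg (fun _ hu => hu.1.1)

/-- `u` with `f u < x` is `≤ pinv f x`. -/
lemma le_pinv (f : ℝ → ℝ) {x u : ℝ} (hu : u ∈ Set.Icc (0:ℝ) 1) (h : f u < x) :
    u ≤ pinv f x :=
  le_csSup (bddAbove_S f x) ⟨hu, h⟩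

/-- If `x ≤ f t` then `pinv f x ≤ t`. -/
lemma pinv_le (f : ℝ → ℝ) (hf : StrictMonoOn f (Set.Icc (0:ℝ) 1)) {x t : ℝ}
    (ht : t ∈ Set.Icc (0:ℝ) 1) (h : x ≤ f t) : pinv f x ≤ t := by
  refine Real.sSup_le (fun u hu => ?_) ht.1
  exact le_of_lt ((hf.lt_iff_lt hu.1 ht).mp (lt_of_lt_of_le hu.2 h))

/-- If `f t ≤ x` then `t ≤ pinv f x`. -/
lemma le_pinv' (f : ℝ → ℝ) (hf : StrictMonoOn f (Set.Icc (0:ℝ) 1)) {x t : ℝ}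
    (ht : t ∈ Set.Icc (0:ℝ) 1) (h : f t ≤ x) : t ≤ pinv f x := by
  by_contra hc
  push_neg at hc
  set u := (pinv f x + t) / 2 with hu
  have h0 : 0 ≤ pinv f x := pinv_nonneg f x
  have hu1 : pinv f x < u := by rw [hu]; linarith
  have hu2 : u < t := by rw [hu]; linarith
  have huI : u ∈ Set.Icc (0:ℝ) 1 := ⟨by linarith, by linarith [ht.2]⟩
  have : f u < x := lt_of_lt_of_le (hf huI ht hu2) h
  exact absurd (le_pinv f huI this) (not_le.mpr hu1)

lemma pinv_mono (f : ℝ → ℝ) {x y : ℝ} (hxy : x ≤ y) : pinv f x ≤ pinv f y :=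
  Real.sSup_le (fun u hu => le_pinv f hu.1 (lt_of_lt_of_le hu.2 hxy)) (pinv_nonneg f y)

theorem pinv_key (f : ℝ → ℝ) (ι : Type) [Countable ι]
    (b d c : ι → ℝ)
    (hmap : ∀ x ∈ Set.Icc (0:ℝ) 1, f x ∈ Set.Icc (0:ℝ) 1)
    (hf : StrictMonoOn f (Set.Icc (0:ℝ) 1))
    (M C : Set ℝ) (hM : M = f '' Set.Icc (0:ℝ) 1) (hC : C = Set.range c)
    (hck : ∀ k, M ∩ Set.Icc (b k) (d k) = {c k})
    (hgap : Set.Icc (0:ℝ) 1 \ M = ⋃ k, (Set.Icc (b k) (d k) \ {c k}))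
    {x y : ℝ} (hx : x ∈ Set.Icc (0:ℝ) 1) (hy : y ∈ Set.Icc (0:ℝ) 1) (hxy : x ≤ y) :
    pinv f x = pinv f y ↔ Set.Ioo x y ∩ (M \ C) = ∅ := by
  constructor
  · -- forward direction
    intro heq
    by_contra hne
    obtain ⟨z, hzI, hzM, hzC⟩ := Set.nonempty_iff_ne_empty.mpr hne
    obtain ⟨t, ht, hft⟩ : ∃ t ∈ Set.Icc (0:ℝ) 1, f t = z := by
      have := hzM; rw [hM] at this; exact this
    have hz01 : z ∈ Set.Icc (0:ℝ) 1 := hft ▸ hmap t ht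
    -- there is a point of M strictly between x and z
    have hMxz : ∃ a ∈ Set.Icc (0:ℝ) 1, x < f a ∧ f a < z := by
      by_contra hno
      push_neg at hno
      set w := (x + z) / 2 with hw
      have hxz : x < z := hzI.1
      have hw1 : x < w := by rw [hw]; linarith
      have hw2 : w < z := by rw [hw]; linarith
      have hwI : w ∈ Set.Icc (0:ℝ) 1 := ⟨by linarith [hx.1], by linarith [hz01.2]⟩
      have hwM : w ∉ M := by
        intro hmem
        rw [hM] at hmem
        obtain ⟨a, ha, hfa⟩ := hmem
        have hxa : x < f a := by rw [hfa]; exact hw1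
        have := hno a ha hxa
        rw [hfa] at this
        linarith
      have hwU : w ∈ ⋃ k, (Set.Icc (b k) (d k) \ {c k}) := hgap ▸ ⟨hwI, hwM⟩
      obtain ⟨k, hwk, hwck⟩ := Set.mem_iUnion.mp hwU
      have hzk : z ∉ Set.Icc (b k) (d k) := by
        intro hmem
        have h1 : z ∈ M ∩ Set.Icc (b k) (d k) := ⟨hzM, hmem⟩
        rw [hck k] at h1
        have h2 : z = c k := h1
        exact hzC (by rw [hC, h2]; exact Set.mem_range_self k)
      have hdk : d k < z := by
        by_contra hcon
        push_neg at hcon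
        exact hzk ⟨le_trans hwk.1 (le_of_lt hw2), hcon⟩
      have hckM : c k ∈ M ∩ Set.Icc (b k) (d k) := by rw [hck k]; rfl
      obtain ⟨a, ha, hfa⟩ : ∃ a ∈ Set.Icc (0:ℝ) 1, f a = c k := by
        have := hckM.1; rw [hM] at this; exact this
      have hckz : c k < z := lt_of_le_of_lt hckM.2.2 hdk
      have hckx : c k ≤ x := by
        by_contra hcon
        push_neg at hcon
        have hxa : x < f a := by rw [hfa]; exact hcon
        have := hno a ha hxa
        rw [hfa] at this
        linarith
      have hat : a < t := (hf.lt_iff_lt ha ht).mp (by rw [hfa, hft]; exact hckz)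
      set u := (a + t) / 2 with hu
      have hu1 : a < u := by rw [hu]; linarith
      have hu2 : u < t := by rw [hu]; linarith
      have huI : u ∈ Set.Icc (0:ℝ) 1 := ⟨by linarith [ha.1], by linarith [ht.2]⟩
      have h1 : c k < f u := hfa ▸ hf ha huI hu1
      have h2 : f u < z := hft ▸ hf huI ht hu2
      have h3 : f u ≤ x := by
        by_contra hcon
        push_neg at hcon
        have := hno u huI hcon
        linarith
      have h4 : f u ∈ M ∩ Set.Icc (b k) (d k) :=
        ⟨hM ▸ Set.mem_image_of_mem f huI,
         le_trans hckM.2.1 (le_of_lt h1),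
         le_trans h3 (le_trans (le_of_lt hw1) hwk.2)⟩
      rw [hck k] at h4
      have h5 : f u = c k := h4
      rw [h5] at h1
      exact lt_irrefl _ h1
    obtain ⟨a, ha, hxa, haz⟩ := hMxz
    have h1 : pinv f x ≤ a := pinv_le f hf ha (le_of_lt hxa)
    have h2 : a < t := (hf.lt_iff_lt ha ht).mp (by rw [hft]; exact haz)
    have h3 : t ≤ pinv f y := le_pinv f ht (by rw [hft]; exact hzI.2)
    linarith
  · -- backward direction
    intro h
    refine le_antisymm (pinv_mono f hxy) ?_
    by_contra hc
    push_neg at hc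
    rcases Set.eq_empty_or_nonempty {u | u ∈ Set.Icc (0:ℝ) 1 ∧ f u < y} with he | hne
    · have h0 : pinv f y = 0 := by rw [pinv, he, Real.sSup_empty]
      have := pinv_nonneg f x
      rw [h0] at hc
      linarith
    have hc' : pinv f x < sSup {u | u ∈ Set.Icc (0:ℝ) 1 ∧ f u < y} := hc
    obtain ⟨s, hs, hps⟩ := exists_lt_of_lt_csSup hne hc'
    obtain ⟨hsI, hsy⟩ := hs
    have hxs : x < f s := by
      by_contra hcon
      push_neg at hcon
      exact absurd (le_pinv' f hf hsI hcon) (not_le.mpr hps)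
    set s' := (pinv f x + s) / 2 with hs'
    have h0 : 0 ≤ pinv f x := pinv_nonneg f x
    have hs1 : pinv f x < s' := by rw [hs']; linarith
    have hs2 : s' < s := by rw [hs']; linarith
    have hs'I : s' ∈ Set.Icc (0:ℝ) 1 := ⟨by linarith, by linarith [hsI.2]⟩
    have hxs' : x < f s' := by
      by_contra hcon
      push_neg at hcon
      exact absurd (le_pinv' f hf hs'I hcon) (not_le.mpr hs1)
    have hkey : ∀ u : Set.Ioo s' s, ∃ k, c k = f u.val := by
      rintro ⟨u, hu1, hu2⟩
      have huI : u ∈ Set.Icc (0:ℝ) 1 := ⟨by linarith [hs'I.1], by linarith [hsI.2]⟩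
      have hfu1 : x < f u := lt_trans hxs' (hf hs'I huI hu1)
      have hfu2 : f u < y := lt_trans (hf huI hsI hu2) hsy
      have hfuM : f u ∈ M := hM ▸ Set.mem_image_of_mem f huI
      have hfuC : f u ∈ C := by
        by_contra hcon
        exact absurd (h ▸ (⟨⟨hfu1, hfu2⟩, hfuM, hcon⟩ :
          f u ∈ Set.Ioo x y ∩ (M \ C))) (Set.notMem_empty (f u))
      rw [hC] at hfuC
      exact hfuC
    choose g hg using hkey
    have hginj : Function.Injective g := by
      intro u v huv
      have heq : f u.val = f v.val := by rw [← hg u, ← hg v, huv]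
      have huI : u.val ∈ Set.Icc (0:ℝ) 1 :=
        ⟨by linarith [hs'I.1, u.2.1], by linarith [hsI.2, u.2.2]⟩
      have hvI : v.val ∈ Set.Icc (0:ℝ) 1 :=
        ⟨by linarith [hs'I.1, v.2.1], by linarith [hsI.2, v.2.2]⟩
      exact Subtype.ext (hf.injOn huI hvI heq)
    have hcnt : Countable (Set.Ioo s' s) := hginj.countable
    have hle : (Cardinal.mk (Set.Ioo s' s)) ≤ Cardinal.aleph0 := Cardinal.mk_le_aleph0
    rw [Cardinal.mk_Ioo_real hs2] at hle
    exact absurd hle (not_le.mpr Cardinal.aleph0_lt_continuum)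

end PinvAux

theorem pinv_eq_iff_gap (f : ℝ → ℝ) (ι : Type) [Countable ι] [Nonempty ι]
    (b d c : ι → ℝ)
    (hmap : ∀ x ∈ Set.Icc (0:ℝ) 1, f x ∈ Set.Icc (0:ℝ) 1)
    (hf : StrictMonoOn f (Set.Icc (0:ℝ) 1))
    (M C : Set ℝ) (hM : M = f '' Set.Icc (0:ℝ) 1) (hC : C = Set.range c)
    (hbd : ∀ k, b k < d k)
    (hck : ∀ k, M ∩ Set.Icc (b k) (d k) = {c k})
    (hend : ∀ k, c k = b k ∨ c k = d k)
    (hgap : Set.Icc (0:ℝ) 1 \ M = ⋃ k, (Set.Icc (b k) (d k) \ {c k})) :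
    ∀ x ∈ Set.Icc (0:ℝ) 1, ∀ y ∈ Set.Icc (0:ℝ) 1,
      (pinv f x = pinv f y ↔
        Set.Ioo (min x y) (max x y) ∩ (M \ C) = ∅) := by
  intro x hx y hy
  rcases le_total x y with hxy | hyx
  · rw [min_eq_left hxy, max_eq_right hxy]
    exact PinvAux.pinv_key f ι b d c hmap hf M C hM hC hck hgap hx hy hxy
  · rw [min_eq_right hyx, max_eq_left hyx]
    rw [show (pinv f x = pinv f y) ↔ (pinv f y = pinv f x) from eq_comm]
    exact PinvAux.pinv_key f ι b d c hmap hf M C hM hC hck hgap hy hx hyx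
end

section
/- Let T be a strict t-norm and f : [0,1] → [0,1] strictly increasing with range M. Let C ⊆ M be the countable set of points c_k with {c_k} = M ∩ [b_k,d_k] for the maximal gap intervals [b_k,d_k] of M. Then the function F(x,y) = f^{(-1)}(T(f(x),f(y))) is conditionally cancellative if and only if T(M\C, M) ⊆ M ∪ [0, f(0⁺)], where f(0⁺) = lim_{x→0⁺} f(x). -/
-- helpers (already tested)
lemma pinv_congr {f : ℝ → ℝ} {u v : ℝ} (huv : u ≤ v)
    (h : ∀ w ∈ Set.Icc (0:ℝ) 1, ¬ (u ≤ f w ∧ f w < v)) :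
    pinv f u = pinv f v := by
  unfold pinv
  congr 1
  ext x
  simp only [Set.mem_setOf_eq]
  constructor
  · rintro ⟨hx, hxu⟩; exact ⟨hx, lt_of_lt_of_le hxu huv⟩
  · rintro ⟨hx, hxv⟩
    refine ⟨hx, ?_⟩
    by_contra hle
    exact h x hx ⟨le_of_not_gt hle, hxv⟩

lemma pinv_pos {f : ℝ → ℝ} {u : ℝ} (w : ℝ) (hw : w ∈ Set.Ioc (0:ℝ) 1) (hfw : f w < u) :
    0 < pinv f u := by
  have hb : BddAbove {x | x ∈ Set.Icc (0:ℝ) 1 ∧ f x < u} := ⟨1, fun y hy => hy.1.2⟩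
  have hmem : w ∈ {x | x ∈ Set.Icc (0:ℝ) 1 ∧ f x < u} := ⟨⟨le_of_lt hw.1, hw.2⟩, hfw⟩
  calc (0:ℝ) < w := hw.1
  _ ≤ pinv f u := le_csSup hb hmem

lemma f_lt_of_lt_pinv {f : ℝ → ℝ} (hf : StrictMonoOn f (Set.Icc (0:ℝ) 1)) {u x' : ℝ}
    (hx' : x' ∈ Set.Icc (0:ℝ) 1) (h : x' < pinv f u) : f x' < u := by
  set S := {x | x ∈ Set.Icc (0:ℝ) 1 ∧ f x < u} with hS
  have hne : S.Nonempty := by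
    by_contra hemp
    rw [Set.not_nonempty_iff_eq_empty] at hemp
    have : pinv f u = 0 := by unfold pinv; rw [← hS, hemp]; exact Real.sSup_empty
    rw [this] at h
    exact absurd (lt_of_le_of_lt hx'.1 h) (lt_irrefl _)
  obtain ⟨w, hwS, hxw⟩ := exists_lt_of_lt_csSup hne h
  exact lt_trans (hf hx' hwS.1 hxw) hwS.2

lemma le_f_of_pinv_lt {f : ℝ → ℝ} {u x' : ℝ}
    (hx' : x' ∈ Set.Icc (0:ℝ) 1) (h : pinv f u < x') : u ≤ f x' := by
  by_contra hlt
  have hb : BddAbove {x | x ∈ Set.Icc (0:ℝ) 1 ∧ f x < u} := ⟨1, fun y hy => hy.1.2⟩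
  have : x' ≤ pinv f u := le_csSup hb ⟨hx', lt_of_not_ge hlt⟩
  exact absurd (lt_of_le_of_lt this h) (lt_irrefl _)

section
variable {ι : Type} (b d c : ι → ℝ) (f : ℝ → ℝ) (M C : Set ℝ)

lemma dense_between (hf : StrictMonoOn f (Set.Icc (0:ℝ) 1))
    (hM : M = f '' Set.Icc (0:ℝ) 1) {p₁ p₂ : ℝ} (hp₁ : p₁ ∈ M) (hp₂ : p₂ ∈ M)
    (h : p₁ < p₂) : ∃ μ ∈ M, p₁ < μ ∧ μ < p₂ := by
  subst hM
  obtain ⟨w₁, hw₁, rfl⟩ := hp₁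
  obtain ⟨w₂, hw₂, rfl⟩ := hp₂
  have hw : w₁ < w₂ := by
    by_contra hle
    exact absurd (hf.monotoneOn hw₂ hw₁ (le_of_not_gt hle)) (not_le.mpr h)
  have hmid : (w₁ + w₂) / 2 ∈ Set.Icc (0:ℝ) 1 :=
    ⟨by linarith [hw₁.1, hw₂.1], by linarith [hw₁.2, hw₂.2]⟩
  refine ⟨f ((w₁ + w₂) / 2), ⟨_, hmid, rfl⟩, ?_, ?_⟩
  · exact hf hw₁ hmid (by linarith)
  · exact hf hmid hw₂ (by linarith)

lemma left_approx (hf : StrictMonoOn f (Set.Icc (0:ℝ) 1))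
    (hmap : ∀ x ∈ Set.Icc (0:ℝ) 1, f x ∈ Set.Icc (0:ℝ) 1)
    (hM : M = f '' Set.Icc (0:ℝ) 1) (hC : C = Set.range c)
    (hck : ∀ k, M ∩ Set.Icc (b k) (d k) = {c k})
    (hgap : Set.Icc (0:ℝ) 1 \ M = ⋃ k, (Set.Icc (b k) (d k) \ {c k}))
    {a : ℝ} (haM : a ∈ M) (haC : a ∉ C) (hfa : f 0 < a)
    {δ : ℝ} (hδ : 0 < δ) : ∃ μ ∈ M, a - δ < μ ∧ μ < a := by
  by_contra hcon
  push_neg at hcon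
  have haIcc : a ∈ Set.Icc (0:ℝ) 1 := by
    rw [hM] at haM; obtain ⟨w, hw, rfl⟩ := haM; exact hmap w hw
  have hf0M : f 0 ∈ M := by rw [hM]; exact ⟨0, ⟨le_refl 0, zero_le_one⟩, rfl⟩
  set Q := M ∩ Set.Iio a with hQ
  have hQne : Q.Nonempty := ⟨f 0, hf0M, hfa⟩
  have hQbdd : BddAbove Q := ⟨a, fun μ hμ => le_of_lt hμ.2⟩
  set q := sSup Q with hq
  have hqupper : ∀ μ ∈ M, μ < a → μ ≤ q := fun μ hμ hlt => le_csSup hQbdd ⟨hμ, hlt⟩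
  have hqle : q ≤ a - δ := by
    apply csSup_le hQne
    rintro μ ⟨hμM, hμa⟩
    by_contra hgt
    exact absurd (hcon μ hμM (lt_of_not_ge hgt)) (not_le.mpr hμa)
  have hq0 : 0 ≤ q := by
    have hf00 : (0:ℝ) ≤ f 0 := (hmap 0 ⟨le_refl 0, zero_le_one⟩).1
    exact le_trans hf00 (le_csSup hQbdd ⟨hf0M, hfa⟩)
  have hqa : q < a := lt_of_le_of_lt hqle (by linarith)
  set ρ := (q + a) / 2 with hρ
  have hρ1 : q < ρ := by rw [hρ]; linarith
  have hρ2 : ρ < a := by rw [hρ]; linarith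
  have hρM : ρ ∉ M := fun hmem => absurd (hqupper ρ hmem hρ2) (not_le.mpr hρ1)
  have hρgap : ρ ∈ Set.Icc (0:ℝ) 1 \ M := ⟨⟨by linarith, by linarith [haIcc.2]⟩, hρM⟩
  rw [hgap] at hρgap
  obtain ⟨j, hj⟩ := Set.mem_iUnion.mp hρgap
  obtain ⟨⟨hbρ, hρd⟩, hρc⟩ := hj
  have hcjmem : c j ∈ M ∩ Set.Icc (b j) (d j) := by rw [hck j]; rfl
  have haGap : a ∉ Set.Icc (b j) (d j) := by
    intro hmem
    have : a ∈ M ∩ Set.Icc (b j) (d j) := ⟨haM, hmem⟩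
    rw [hck j] at this
    exact haC (hC ▸ ⟨j, this.symm⟩)
  have hdj : d j < a := by
    by_contra hge
    exact haGap ⟨le_trans hbρ (le_of_lt hρ2), le_of_not_gt hge⟩
  have hcja : c j < a := lt_of_le_of_lt hcjmem.2.2 hdj
  obtain ⟨μ₀, hμ₀M, hμ₀1, hμ₀2⟩ := dense_between f M hf hM hcjmem.1 haM hcja
  have hμ₀q : μ₀ ≤ q := hqupper μ₀ hμ₀M hμ₀2
  have : μ₀ ∈ M ∩ Set.Icc (b j) (d j) :=
    ⟨hμ₀M, le_trans hcjmem.2.1 (le_of_lt hμ₀1), by linarith⟩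
  rw [hck j] at this
  exact absurd hμ₀1 (not_lt.mpr (le_of_eq (Set.mem_singleton_iff.mp this)))

lemma right_approx (hf : StrictMonoOn f (Set.Icc (0:ℝ) 1))
    (hmap : ∀ x ∈ Set.Icc (0:ℝ) 1, f x ∈ Set.Icc (0:ℝ) 1)
    (hM : M = f '' Set.Icc (0:ℝ) 1) (hC : C = Set.range c)
    (hck : ∀ k, M ∩ Set.Icc (b k) (d k) = {c k})
    (hgap : Set.Icc (0:ℝ) 1 \ M = ⋃ k, (Set.Icc (b k) (d k) \ {c k}))
    {a : ℝ} (haM : a ∈ M) (haC : a ∉ C) (hfa : a < f 1)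
    {δ : ℝ} (hδ : 0 < δ) : ∃ μ ∈ M, a < μ ∧ μ < a + δ := by
  by_contra hcon
  push_neg at hcon
  have haIcc : a ∈ Set.Icc (0:ℝ) 1 := by
    rw [hM] at haM; obtain ⟨w, hw, rfl⟩ := haM; exact hmap w hw
  have hf1M : f 1 ∈ M := by rw [hM]; exact ⟨1, ⟨zero_le_one, le_refl 1⟩, rfl⟩
  set Q := M ∩ Set.Ioi a with hQ
  have hQne : Q.Nonempty := ⟨f 1, hf1M, hfa⟩
  have hQbdd : BddBelow Q := ⟨a, fun μ hμ => le_of_lt hμ.2⟩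
  set r := sInf Q with hr
  have hrlower : ∀ μ ∈ M, a < μ → r ≤ μ := fun μ hμ hlt => csInf_le hQbdd ⟨hμ, hlt⟩
  have hrge : a + δ ≤ r := by
    apply le_csInf hQne
    rintro μ ⟨hμM, hμa⟩
    by_contra hgt
    exact absurd (hcon μ hμM hμa) (not_le.mpr (lt_of_not_ge hgt))
  have hra : a < r := by linarith
  have hr1 : r ≤ 1 := by
    have := csInf_le hQbdd (⟨hf1M, hfa⟩ : f 1 ∈ Q)
    exact le_trans this (hmap 1 ⟨zero_le_one, le_refl 1⟩).2
  set ρ := (a + r) / 2 with hρ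
  have hρ1 : a < ρ := by rw [hρ]; linarith
  have hρ2 : ρ < r := by rw [hρ]; linarith
  have hρM : ρ ∉ M := fun hmem => absurd (hrlower ρ hmem hρ1) (not_le.mpr hρ2)
  have hρgap : ρ ∈ Set.Icc (0:ℝ) 1 \ M := ⟨⟨by linarith [haIcc.1], by linarith⟩, hρM⟩
  rw [hgap] at hρgap
  obtain ⟨j, hj⟩ := Set.mem_iUnion.mp hρgap
  obtain ⟨⟨hbρ, hρd⟩, hρc⟩ := hj
  have hcjmem : c j ∈ M ∩ Set.Icc (b j) (d j) := by rw [hck j]; rfl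
  have haGap : a ∉ Set.Icc (b j) (d j) := by
    intro hmem
    have : a ∈ M ∩ Set.Icc (b j) (d j) := ⟨haM, hmem⟩
    rw [hck j] at this
    exact haC (hC ▸ ⟨j, this.symm⟩)
  have hbj : a < b j := by
    by_contra hge
    exact haGap ⟨le_of_not_gt hge, le_trans (le_of_lt hρ1) hρd⟩
  have hcja : a < c j := lt_of_lt_of_le hbj hcjmem.2.1
  obtain ⟨μ₀, hμ₀M, hμ₀1, hμ₀2⟩ := dense_between f M hf hM haM hcjmem.1 hcja
  have hμ₀r : r ≤ μ₀ := hrlower μ₀ hμ₀M hμ₀1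
  have : μ₀ ∈ M ∩ Set.Icc (b j) (d j) :=
    ⟨hμ₀M, by linarith, le_trans (le_of_lt hμ₀2) hcjmem.2.2⟩
  rw [hck j] at this
  exact absurd hμ₀2 (not_lt.mpr (le_of_eq (Set.mem_singleton_iff.mp this).symm))

lemma max_mem_C (hf : StrictMonoOn f (Set.Icc (0:ℝ) 1))
    (hmap : ∀ x ∈ Set.Icc (0:ℝ) 1, f x ∈ Set.Icc (0:ℝ) 1)
    (hM : M = f '' Set.Icc (0:ℝ) 1) (hC : C = Set.range c)
    (hck : ∀ k, M ∩ Set.Icc (b k) (d k) = {c k})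
    (hgap : Set.Icc (0:ℝ) 1 \ M = ⋃ k, (Set.Icc (b k) (d k) \ {c k}))
    (hf1 : f 1 < 1) : f 1 ∈ C := by
  have hle : ∀ μ ∈ M, μ ≤ f 1 := by
    rintro μ hμ; rw [hM] at hμ; obtain ⟨w, hw, rfl⟩ := hμ
    exact hf.monotoneOn hw ⟨zero_le_one, le_refl 1⟩ hw.2
  have h1M : (1:ℝ) ∉ M := fun h => absurd (hle 1 h) (not_le.mpr hf1)
  have h1gap : (1:ℝ) ∈ Set.Icc (0:ℝ) 1 \ M := ⟨⟨zero_le_one, le_refl 1⟩, h1M⟩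
  rw [hgap] at h1gap
  obtain ⟨j, hj⟩ := Set.mem_iUnion.mp h1gap
  obtain ⟨⟨hb1, h1d⟩, h1c⟩ := hj
  have hcjmem : c j ∈ M ∩ Set.Icc (b j) (d j) := by rw [hck j]; rfl
  have hf1M : f 1 ∈ M := by rw [hM]; exact ⟨1, ⟨zero_le_one, le_refl 1⟩, rfl⟩
  have hbe : b j ≤ f 1 := by
    by_contra h
    exact absurd (hle (c j) hcjmem.1)
      (not_le.mpr (lt_of_lt_of_le (lt_of_not_ge h) hcjmem.2.1))
  have : f 1 ∈ M ∩ Set.Icc (b j) (d j) := ⟨hf1M, hbe, le_trans (le_of_lt hf1) h1d⟩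
  rw [hck j] at this
  rw [hC]
  exact ⟨j, (Set.mem_singleton_iff.mp this).symm⟩

end

theorem condCancellative_iff_gap_condition (T : ℝ → ℝ → ℝ) (f : ℝ → ℝ)
    (ι : Type) [Countable ι] [Nonempty ι] (b d c : ι → ℝ)
    (hT : IsStrictTNorm T)
    (hmap : ∀ x ∈ Set.Icc (0:ℝ) 1, f x ∈ Set.Icc (0:ℝ) 1)
    (hf : StrictMonoOn f (Set.Icc (0:ℝ) 1))
    (M C : Set ℝ) (hM : M = f '' Set.Icc (0:ℝ) 1) (hC : C = Set.range c)
    (hbd : ∀ k, b k < d k)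
    (hck : ∀ k, M ∩ Set.Icc (b k) (d k) = {c k})
    (hend : ∀ k, c k = b k ∨ c k = d k)
    (hgap : Set.Icc (0:ℝ) 1 \ M = ⋃ k, (Set.Icc (b k) (d k) \ {c k}))
    (F : ℝ → ℝ → ℝ) (hF : ∀ x y, F x y = pinv f (T (f x) (f y))) :
    CondCancellative F ↔
      ∀ a ∈ M \ C, ∀ m ∈ M,
        T a m ∈ M ∪ Set.Icc (0:ℝ) (sInf (f '' Set.Ioc (0:ℝ) 1)) := by
  obtain ⟨⟨hTmem, hTcomm, hTassoc, hTmono, hTone⟩, hTcont, hTstrict⟩ := hT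
  set α := sInf (f '' Set.Ioc (0:ℝ) 1) with hα
  have hIcc01 : (0:ℝ) ∈ Set.Icc (0:ℝ) 1 := ⟨le_refl 0, zero_le_one⟩
  have hIcc11 : (1:ℝ) ∈ Set.Icc (0:ℝ) 1 := ⟨zero_le_one, le_refl 1⟩
  have hMIcc : ∀ μ ∈ M, μ ∈ Set.Icc (0:ℝ) 1 := by
    rintro μ hμ; rw [hM] at hμ; obtain ⟨w, hw, rfl⟩ := hμ; exact hmap w hw
  have hfmem : ∀ x ∈ Set.Icc (0:ℝ) 1, f x ∈ M := fun x hx => hM ▸ ⟨x, hx, rfl⟩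
  have hIocne : (f '' Set.Ioc (0:ℝ) 1).Nonempty := ⟨f 1, 1, ⟨zero_lt_one, le_refl 1⟩, rfl⟩
  have hIocbdd : BddBelow (f '' Set.Ioc (0:ℝ) 1) := by
    refine ⟨0, ?_⟩
    rintro β ⟨w, hw, rfl⟩
    exact (hmap w ⟨le_of_lt hw.1, hw.2⟩).1
  have hα0 : 0 ≤ α := by
    apply le_csInf hIocne
    rintro β ⟨w, hw, rfl⟩
    exact (hmap w ⟨le_of_lt hw.1, hw.2⟩).1
  have hf0α : f 0 ≤ α := by
    apply le_csInf hIocne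
    rintro β ⟨w, hw, rfl⟩
    exact hf.monotoneOn hIcc01 ⟨le_of_lt hw.1, hw.2⟩ (le_of_lt hw.1)
  have hTle1 : ∀ x ∈ Set.Icc (0:ℝ) 1, ∀ y ∈ Set.Icc (0:ℝ) 1, T x y ≤ x := by
    intro x hx y hy
    calc T x y ≤ T x 1 := hTmono x hx y hy 1 hIcc11 hy.2
    _ = x := hTone x hx
  constructor
  · -- CondCancellative → gap condition
    intro hCC
    rintro a ⟨haM, haC⟩ m hmM
    rw [Set.mem_union]
    by_contra hbad
    push_neg at hbad
    obtain ⟨htM, htα⟩ := hbad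
    set t := T a m with ht
    have haIcc := hMIcc a haM
    have hmIcc := hMIcc m hmM
    have htIcc : t ∈ Set.Icc (0:ℝ) 1 := hTmem a haIcc m hmIcc
    have htα' : α < t := by
      rw [Set.mem_Icc] at htα
      push_neg at htα
      exact htα htIcc.1
    have htlea : t ≤ a := hTle1 a haIcc m hmIcc
    have htlem : t ≤ m := by
      rw [ht, hTcomm a haIcc m hmIcc]
      exact hTle1 m hmIcc a haIcc
    have hta : t < a := lt_of_le_of_ne htlea (fun h => htM (h ▸ haM))
    have htm : t < m := lt_of_le_of_ne htlem (fun h => htM (h ▸ hmM))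
    have hmpos : 0 < m := lt_of_le_of_lt hα0 (lt_of_lt_of_le htα' htlem) |>.trans_le (le_refl m)
    have hapos : 0 < a := lt_of_le_of_lt hα0 (lt_of_lt_of_le htα' htlea)
    have hf0t : f 0 < t := lt_of_le_of_lt hf0α htα'
    have hf0a : f 0 < a := lt_trans hf0t hta
    -- a < 1
    have ha1 : a < 1 := by
      rcases lt_or_eq_of_le haIcc.2 with h | h
      · exact h
      · exfalso
        apply htM
        have : t = m := by
          rw [ht, h, hTcomm 1 hIcc11 m hmIcc, hTone m hmIcc]
        rw [this]; exact hmM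
    -- a < f 1
    obtain ⟨xa, hxa, hfxa⟩ : ∃ xa ∈ Set.Icc (0:ℝ) 1, f xa = a := by
      have := haM; rw [hM] at this; obtain ⟨w, hw, hfw⟩ := this; exact ⟨w, hw, hfw⟩
    have haf1 : a < f 1 := by
      have hle : a ≤ f 1 := hfxa ▸ hf.monotoneOn hxa hIcc11 hxa.2
      rcases lt_or_eq_of_le hle with h | h
      · exact h
      · exfalso
        exact haC (h ▸ max_mem_C b d c f M C hf hmap hM hC hck hgap (h ▸ ha1))
    obtain ⟨ym, hym, hfym⟩ : ∃ ym ∈ Set.Icc (0:ℝ) 1, f ym = m := by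
      have := hmM; rw [hM] at this; obtain ⟨w, hw, hfw⟩ := this; exact ⟨w, hw, hfw⟩
    -- gap index
    have htgap : t ∈ Set.Icc (0:ℝ) 1 \ M := ⟨htIcc, htM⟩
    rw [hgap] at htgap
    obtain ⟨k, hk⟩ := Set.mem_iUnion.mp htgap
    obtain ⟨⟨hbt, htd⟩, htck⟩ := hk
    have htck' : t ≠ c k := htck
    -- pinv t > 0
    have hσpos : 0 < pinv f t := by
      obtain ⟨β, hβ, hβt⟩ := exists_lt_of_csInf_lt hIocne htα'
      obtain ⟨w, hw, rfl⟩ := hβ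
      exact pinv_pos w hw hβt
    -- continuity of ξ ↦ T ξ m at a within Icc
    have hg : ContinuousOn (fun ξ => T ξ m) (Set.Icc (0:ℝ) 1) := by
      have heq : (fun ξ => T ξ m) = (fun p : ℝ × ℝ => T p.1 p.2) ∘ (fun ξ => (ξ, m)) := rfl
      rw [heq]
      apply hTcont.comp ((continuous_id.prodMk continuous_const).continuousOn)
      intro ξ hξ
      exact Set.mk_mem_prod hξ hmIcc
    have hga : ContinuousWithinAt (fun ξ => T ξ m) (Set.Icc (0:ℝ) 1) a := hg a haIcc
    -- key finisher
    have finish : ∀ a' ∈ M, a' ≠ a → pinv f (T a' m) = pinv f t → False := by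
      intro a' ha'M ha'ne hpe
      obtain ⟨xa', hxa', hfxa'⟩ : ∃ x' ∈ Set.Icc (0:ℝ) 1, f x' = a' := by
        have := ha'M; rw [hM] at this; obtain ⟨w, hw, hfw⟩ := this; exact ⟨w, hw, hfw⟩
      have h1 : F ym xa = pinv f t := by
        rw [hF, hfym, hfxa, hTcomm m hmIcc a haIcc, ← ht]
      have h2 : F ym xa' = pinv f t := by
        rw [hF, hfym, hfxa', hTcomm m hmIcc a' (hMIcc a' ha'M), hpe]
      have := hCC ym hym xa hxa xa' hxa' (h1.trans h2.symm) (h1 ▸ hσpos)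
      exact ha'ne (by rw [← hfxa', ← this, hfxa])
    rcases hend k with hcb | hcd
    · -- c k = b k : approach from the left
      set q := sSup (M ∩ Set.Iio t) with hq
      have hQne : (M ∩ Set.Iio t).Nonempty := ⟨f 0, hfmem 0 hIcc01, hf0t⟩
      have hQbdd : BddAbove (M ∩ Set.Iio t) := ⟨t, fun μ hμ => le_of_lt hμ.2⟩
      have hqub : ∀ μ ∈ M, μ < t → μ ≤ q := fun μ hμ hlt => le_csSup hQbdd ⟨hμ, hlt⟩
      have hbkt : b k < t := lt_of_le_of_ne hbt (fun h => htck' (hcb ▸ h.symm))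
      have hqb : q ≤ b k := by
        apply csSup_le hQne
        rintro μ ⟨hμM, hμt⟩
        by_contra hgt
        have hmem : μ ∈ M ∩ Set.Icc (b k) (d k) :=
          ⟨hμM, le_of_lt (lt_of_not_ge hgt), le_trans (le_of_lt hμt) htd⟩
        rw [hck k] at hmem
        have : μ = b k := hcb ▸ Set.mem_singleton_iff.mp hmem
        exact hgt (le_of_eq this)
      have hqt : q < t := lt_of_le_of_lt hqb hbkt
      obtain ⟨δ, hδpos, hδ⟩ := Metric.continuousWithinAt_iff.mp hga (t - q) (by linarith)
      obtain ⟨a', ha'M, ha'1, ha'2⟩ :=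
        left_approx b d c f M C hf hmap hM hC hck hgap haM haC hf0a hδpos
      have ha'Icc := hMIcc a' ha'M
      have hdist : dist a' a < δ := by
        rw [Real.dist_eq, abs_lt]; constructor <;> linarith
      have hTa' := hδ ha'Icc hdist
      rw [Real.dist_eq, abs_lt] at hTa'
      have hu'q : q < T a' m := by
        have : T a m = t := rfl
        simp only [this] at hTa'
        linarith [hTa'.1]
      have hu't : T a' m < t := by
        calc T a' m = T m a' := hTcomm a' ha'Icc m hmIcc
        _ < T m a := hTstrict m hmIcc a' ha'Icc a haIcc hmpos ha'2
        _ = T a m := hTcomm m hmIcc a haIcc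
      have hpe : pinv f (T a' m) = pinv f t := by
        apply pinv_congr (le_of_lt hu't)
        rintro w hw ⟨h1, h2⟩
        exact absurd (hqub (f w) (hfmem w hw) h2) (not_le.mpr (lt_of_lt_of_le hu'q h1))
      exact finish a' ha'M (ne_of_lt ha'2) hpe
    · -- c k = d k : approach from the right
      set s := sInf (M ∩ Set.Ioi t) with hs
      have hQne : (M ∩ Set.Ioi t).Nonempty := ⟨a, haM, hta⟩
      have hQbdd : BddBelow (M ∩ Set.Ioi t) := ⟨t, fun μ hμ => le_of_lt hμ.2⟩
      have hqlb : ∀ μ ∈ M, t < μ → s ≤ μ := fun μ hμ hlt => csInf_le hQbdd ⟨hμ, hlt⟩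
      have htdk : t < d k := lt_of_le_of_ne htd (fun h => htck' (hcd ▸ h))
      have hsd : d k ≤ s := by
        apply le_csInf hQne
        rintro μ ⟨hμM, hμt⟩
        by_contra hgt
        have hmem : μ ∈ M ∩ Set.Icc (b k) (d k) :=
          ⟨hμM, le_trans hbt (le_of_lt hμt), le_of_lt (lt_of_not_ge hgt)⟩
        rw [hck k] at hmem
        have : μ = d k := hcd ▸ Set.mem_singleton_iff.mp hmem
        exact hgt this.ge
      have hts : t < s := lt_of_lt_of_le htdk hsd
      obtain ⟨δ, hδpos, hδ⟩ := Metric.continuousWithinAt_iff.mp hga (s - t) (by linarith)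
      obtain ⟨a', ha'M, ha'1, ha'2⟩ :=
        right_approx b d c f M C hf hmap hM hC hck hgap haM haC haf1 hδpos
      have ha'Icc := hMIcc a' ha'M
      have hdist : dist a' a < δ := by
        rw [Real.dist_eq, abs_lt]; constructor <;> linarith
      have hTa' := hδ ha'Icc hdist
      rw [Real.dist_eq, abs_lt] at hTa'
      have hu's : T a' m < s := by
        have : T a m = t := rfl
        simp only [this] at hTa'
        linarith [hTa'.2]
      have hu't : t < T a' m := by
        calc t = T a m := rfl
        _ = T m a := hTcomm a haIcc m hmIcc
        _ < T m a' := hTstrict m hmIcc a haIcc a' ha'Icc hmpos ha'1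
        _ = T a' m := hTcomm m hmIcc a' ha'Icc
      have hpe : pinv f t = pinv f (T a' m) := by
        apply pinv_congr (le_of_lt hu't)
        rintro w hw ⟨h1, h2⟩
        rcases lt_or_eq_of_le h1 with h1' | h1'
        · exact absurd (hqlb (f w) (hfmem w hw) h1') (not_le.mpr (lt_of_lt_of_le h2 (le_of_lt hu's)))
        · exact htM (h1' ▸ hfmem w hw)
      exact finish a' ha'M (ne_of_gt ha'1) hpe.symm
  · -- gap condition → CondCancellative
    intro hcond
    have key : ∀ x ∈ Set.Icc (0:ℝ) 1, ∀ y ∈ Set.Icc (0:ℝ) 1, ∀ z ∈ Set.Icc (0:ℝ) 1,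
        F x y = F x z → 0 < F x y → y < z → False := by
      intro x hx y hy z hz heq hpos hyz
      set A := f x with hA
      set B := f y with hB
      set D := f z with hD
      have hAIcc : A ∈ Set.Icc (0:ℝ) 1 := hmap x hx
      have hBIcc : B ∈ Set.Icc (0:ℝ) 1 := hmap y hy
      have hDIcc : D ∈ Set.Icc (0:ℝ) 1 := hmap z hz
      have hBD : B < D := hf hy hz hyz
      set u := T A B with hu
      set v := T A D with hv
      have hFu : F x y = pinv f u := hF x y
      have hFv : F x z = pinv f v := hF x z
      have hσpos : 0 < pinv f u := hFu ▸ hpos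
      have hpinveq : pinv f u = pinv f v := by rw [← hFu, ← hFv]; exact heq
      have hApos : 0 < A := by
        rcases lt_or_eq_of_le hAIcc.1 with h | h
        · exact h
        · exfalso
          have hu0 : u ≤ 0 := by
            calc u = T A B := rfl
            _ ≤ T A 1 := hTmono A hAIcc B hBIcc 1 hIcc11 hBIcc.2
            _ = A := hTone A hAIcc
            _ = 0 := h.symm
          have hSemp : {x | x ∈ Set.Icc (0:ℝ) 1 ∧ f x < u} = ∅ := by
            apply Set.eq_empty_of_forall_notMem
            rintro w ⟨hwI, hwlt⟩
            exact absurd (lt_of_lt_of_le hwlt hu0) (not_lt.mpr (hmap w hwI).1)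
          have : pinv f u = 0 := by unfold pinv; rw [hSemp]; exact Real.sSup_empty
          rw [this] at hσpos
          exact lt_irrefl 0 hσpos
      have huv : u < v := hTstrict A hAIcc B hBIcc D hDIcc hApos hBD
      -- α < u
      have hαu : α < u := by
        have hSne : {x' | x' ∈ Set.Icc (0:ℝ) 1 ∧ f x' < u}.Nonempty := by
          by_contra hemp
          rw [Set.not_nonempty_iff_eq_empty] at hemp
          have : pinv f u = 0 := by unfold pinv; rw [hemp]; exact Real.sSup_empty
          rw [this] at hσpos
          exact lt_irrefl 0 hσpos
        obtain ⟨w', hw'S, hw'pos⟩ := exists_lt_of_lt_csSup hSne hσpos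
        calc α ≤ f w' := csInf_le hIocbdd ⟨w', ⟨hw'pos, hw'S.1.2⟩, rfl⟩
        _ < u := hw'S.2
      -- two points of (y,z) avoiding C
      have hbadC : {w | w ∈ Set.Icc (0:ℝ) 1 ∧ f w ∈ C}.Countable := by
        apply Set.countable_of_injective_of_countable_image
          (hf.injOn.mono (fun w hw => hw.1))
        have him : f '' {w | w ∈ Set.Icc (0:ℝ) 1 ∧ f w ∈ C} ⊆ C := by
          rintro β ⟨w, hw, rfl⟩; exact hw.2
        exact Set.Countable.mono him (hC ▸ Set.countable_range c)
      have hunc : ∀ y' z' : ℝ, y' < z' → ¬ (Set.Ioo y' z').Countable := by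
        intro y' z' hlt hcnt
        rw [← Cardinal.le_aleph0_iff_set_countable, Cardinal.mk_Ioo_real hlt] at hcnt
        exact absurd hcnt (not_le.mpr Cardinal.aleph0_lt_continuum)
      have pick : ∀ y' z', y < y' ∨ y = y' → y' < z' → z' ≤ z →
          ∃ w ∈ Set.Ioo y' z', f w ∉ C := by
        intro y' z' _ hlt hle
        by_contra hcon
        push_neg at hcon
        apply hunc y' z' hlt
        apply hbadC.mono
        intro w hw
        refine ⟨?_, hcon w hw⟩
        constructor
        · rcases ‹y < y' ∨ y = y'› with h | h
          · exact le_trans hy.1 (le_of_lt (lt_trans h hw.1))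
          · exact le_trans hy.1 (le_of_lt (h ▸ hw.1))
        · exact le_trans (le_of_lt hw.2) (le_trans hle hz.2)
      obtain ⟨w₁, hw₁Ioo, hw₁C⟩ := pick y z (Or.inr rfl) hyz (le_refl z)
      obtain ⟨w₂, hw₂Ioo, hw₂C⟩ := pick w₁ z (Or.inl hw₁Ioo.1) hw₁Ioo.2 (le_refl z)
      have hw₁Icc : w₁ ∈ Set.Icc (0:ℝ) 1 :=
        ⟨le_trans hy.1 (le_of_lt hw₁Ioo.1), le_trans (le_of_lt hw₁Ioo.2) hz.2⟩
      have hw₂Icc : w₂ ∈ Set.Icc (0:ℝ) 1 :=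
        ⟨le_trans hw₁Icc.1 (le_of_lt hw₂Ioo.1), le_trans (le_of_lt hw₂Ioo.2) hz.2⟩
      set E₁ := f w₁ with hE₁
      set E₂ := f w₂ with hE₂
      have hE₁Icc := hmap w₁ hw₁Icc
      have hE₂Icc := hmap w₂ hw₂Icc
      have hBE₁ : B < E₁ := hf hy hw₁Icc hw₁Ioo.1
      have hE₁E₂ : E₁ < E₂ := hf hw₁Icc hw₂Icc hw₂Ioo.1
      have hE₂D : E₂ < D := hf hw₂Icc hz hw₂Ioo.2
      set W₁ := T A E₁ with hW₁
      set W₂ := T A E₂ with hW₂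
      have huW₁ : u < W₁ := hTstrict A hAIcc B hBIcc E₁ hE₁Icc hApos hBE₁
      have hW₁W₂ : W₁ < W₂ := hTstrict A hAIcc E₁ hE₁Icc E₂ hE₂Icc hApos hE₁E₂
      have hW₂v : W₂ < v := hTstrict A hAIcc E₂ hE₂Icc D hDIcc hApos hE₂D
      have hAM : A ∈ M := hfmem x hx
      have getW : ∀ (Wt : ℝ) (w : ℝ), w ∈ Set.Icc (0:ℝ) 1 → f w ∉ C → Wt = T A (f w) →
          u < Wt → Wt < v → ∃ ξ ∈ Set.Icc (0:ℝ) 1, f ξ = Wt ∧ ξ = pinv f u := by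
        intro Wt w hwI hwC hWt huWt hWtv
        have hcw := hcond (f w) ⟨hfmem w hwI, hwC⟩ A hAM
        rw [hTcomm (f w) (hmap w hwI) A hAIcc] at hcw
        rw [← hWt] at hcw
        have hWtM : Wt ∈ M := by
          rcases hcw with h | h
          · exact h
          · exact absurd h.2 (not_le.mpr (lt_trans hαu huWt))
        obtain ⟨ξ, hξ, hfξ⟩ : ∃ ξ ∈ Set.Icc (0:ℝ) 1, f ξ = Wt := by
          have := hWtM; rw [hM] at this; obtain ⟨w', hw', hfw'⟩ := this; exact ⟨w', hw', hfw'⟩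
        refine ⟨ξ, hξ, hfξ, ?_⟩
        rcases lt_trichotomy ξ (pinv f u) with h | h | h
        · exact absurd (hfξ ▸ f_lt_of_lt_pinv hf hξ h) (not_lt.mpr (le_of_lt huWt))
        · exact h
        · exfalso
          rw [hpinveq] at h
          exact absurd (hfξ ▸ le_f_of_pinv_lt hξ h) (not_le.mpr hWtv)
      obtain ⟨ξ₁, hξ₁, hfξ₁, hξ₁σ⟩ := getW W₁ w₁ hw₁Icc hw₁C rfl huW₁ (lt_trans hW₁W₂ hW₂v)
      obtain ⟨ξ₂, hξ₂, hfξ₂, hξ₂σ⟩ := getW W₂ w₂ hw₂Icc hw₂C rfl (lt_trans huW₁ hW₁W₂) hW₂v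
      have : W₁ = W₂ := by rw [← hfξ₁, ← hfξ₂, hξ₁σ, hξ₂σ]
      exact absurd this (ne_of_lt hW₁W₂)
    intro x hx y hy z hz heq hpos
    rcases lt_trichotomy y z with h | h | h
    · exact absurd (key x hx y hy z hz heq hpos h) (fun hf => hf)
    · exact h
    · exact absurd (key x hx z hz y hy heq.symm (heq ▸ hpos) h) (fun hf => hf)
end

section
/- Let T be a strict t-norm, f : [0,1] → [0,1] non-decreasing with range M, Q = {w : ∃ x ≠ y, f(x) = f(y) = w}, and F(x,y) = f^{(-1)}(T(f(x),f(y))). If F is conditionally cancellative, then T(Q, M) ⊆ [0, f(0⁺)], i.e., T(q, m) ≤ lim_{x→0⁺} f(x) for all q ∈ Q, m ∈ M. -/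
theorem condCancellative_implies_TQ_small (T : ℝ → ℝ → ℝ) (f : ℝ → ℝ)
    (hT : IsStrictTNorm T)
    (hmap : ∀ x ∈ Set.Icc (0:ℝ) 1, f x ∈ Set.Icc (0:ℝ) 1)
    (hf : MonotoneOn f (Set.Icc (0:ℝ) 1))
    (M Q : Set ℝ) (hM : M = f '' Set.Icc (0:ℝ) 1)
    (hQ : Q = {w | ∃ x ∈ Set.Icc (0:ℝ) 1, ∃ y ∈ Set.Icc (0:ℝ) 1,
      x ≠ y ∧ f x = w ∧ f y = w})
    (hcc : CondCancellative (fun x y => pinv f (T (f x) (f y)))) :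
    ∀ q ∈ Q, ∀ m ∈ M, T q m ≤ sInf (f '' Set.Ioc (0:ℝ) 1) := by
  intro q hq m hm
  subst hQ hM
  obtain ⟨x, hx, y, hy, hxy, hfx, hfy⟩ := hq
  obtain ⟨z, hz, hfz⟩ := hm
  have hq1 : q ∈ Set.Icc (0:ℝ) 1 := hfx ▸ hmap x hx
  have hm1 : m ∈ Set.Icc (0:ℝ) 1 := hfz ▸ hmap z hz
  have heq : (fun a b => pinv f (T (f a) (f b))) z x
      = (fun a b => pinv f (T (f a) (f b))) z y := by
    simp only [hfx, hfy]
  have hnpos : ¬ 0 < pinv f (T (f z) (f x)) := fun h => hxy (hcc z hz x hx y hy heq h)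
  have hkey : ∀ t ∈ Set.Ioc (0:ℝ) 1, T m q ≤ f t := by
    intro t ht
    by_contra hlt
    push_neg at hlt
    apply hnpos
    rw [hfz, hfx]
    have htmem : t ∈ {x | x ∈ Set.Icc (0:ℝ) 1 ∧ f x < T m q} :=
      ⟨⟨le_of_lt ht.1, ht.2⟩, hlt⟩
    have hbdd : BddAbove {x | x ∈ Set.Icc (0:ℝ) 1 ∧ f x < T m q} :=
      ⟨1, fun a ha => ha.1.2⟩
    calc (0:ℝ) < t := ht.1
      _ ≤ pinv f (T m q) := le_csSup hbdd htmem
  have hcomm : T q m = T m q := hT.1.2.1 q hq1 m hm1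
  rw [hcomm]
  refine le_csInf ⟨f 1, ⟨1, ⟨zero_lt_one, le_refl 1⟩, rfl⟩⟩ ?_
  rintro b ⟨t, ht, rfl⟩
  exact hkey t ht
end

section
/- Let T be a strict t-norm and f : [0,1] → [0,1] a monotone function. If the function F(x,y) = f^{(-1)}(T(f(x),f(y))) is a t-subnorm and f is non-increasing, then T(f(1),f(1)) = f(1) and lim_{x→0⁺} f(x) = f(1). -/
theorem nonincreasing_tsubnorm_necessary (T : ℝ → ℝ → ℝ) (f : ℝ → ℝ)
    (hT : IsStrictTNorm T)
    (hmap : ∀ x ∈ Set.Icc (0:ℝ) 1, f x ∈ Set.Icc (0:ℝ) 1)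
    (hf : AntitoneOn f (Set.Icc (0:ℝ) 1))
    (hF : IsTSubnorm (fun x y => pinvDec f (T (f x) (f y)))) :
    T (f 1) (f 1) = f 1 ∧ sSup (f '' Set.Ioc (0:ℝ) 1) = f 1 := by
  obtain ⟨⟨hTmap, hTcomm, hTassoc, hTmono, hTone⟩, hTcont, hTstrict⟩ := hT
  obtain ⟨hFmap, hFcomm, hFassoc, hFmono, hFmin⟩ := hF
  have h01 : (0:ℝ) ∈ Set.Icc (0:ℝ) 1 := by constructor <;> norm_num
  have h11 : (1:ℝ) ∈ Set.Icc (0:ℝ) 1 := by constructor <;> norm_num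
  have ha01 := hmap 1 h11
  have hbdd : ∀ y : ℝ, BddAbove {x | x ∈ Set.Icc (0:ℝ) 1 ∧ y < f x} :=
    fun y => ⟨1, fun s hs => hs.1.2⟩
  have hTle : ∀ y ∈ Set.Icc (0:ℝ) 1, ∀ z ∈ Set.Icc (0:ℝ) 1, T y z ≤ z := by
    intro y hy z hz
    have h := hTmono z hz y hy 1 h11 hy.2
    rw [hTone z hz] at h
    rw [hTcomm y hy z hz]; exact h
  have lemA : ∀ x ∈ Set.Icc (0:ℝ) 1, ∀ t ∈ Set.Icc (0:ℝ) 1, x < t →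
      f t ≤ T (f x) (f t) := by
    intro x hx t ht hxt
    by_contra h
    push_neg at h
    have hmem : t ∈ {s | s ∈ Set.Icc (0:ℝ) 1 ∧ T (f x) (f t) < f s} := ⟨ht, h⟩
    have h1 : t ≤ pinvDec f (T (f x) (f t)) := le_csSup (hbdd _) hmem
    have h2 : pinvDec f (T (f x) (f t)) ≤ min x t := hFmin x hx t ht
    have h3 := min_le_left x t
    linarith
  have lemB : ∀ x ∈ Set.Icc (0:ℝ) 1, ∀ t ∈ Set.Icc (0:ℝ) 1, 0 < x → x < t →
      f t = 0 ∨ f x = 1 := by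
    intro x hx t ht hx0 hxt
    by_contra h
    push_neg at h
    obtain ⟨ht0, hx1⟩ := h
    have hfx := hmap x hx
    have hft := hmap t ht
    have hft0 : 0 < f t := lt_of_le_of_ne hft.1 (Ne.symm ht0)
    have hfx1 : f x < 1 := lt_of_le_of_ne hfx.2 hx1
    have hs := hTstrict (f t) hft (f x) hfx 1 h11 hft0 hfx1
    rw [hTone (f t) hft] at hs
    have h2 := lemA x hx t ht hxt
    rw [hTcomm (f x) hfx (f t) hft] at h2
    linarith
  by_cases hA : f 1 = 1
  · -- f ≡ 1 on (0,1]
    have hall : ∀ x ∈ Set.Ioc (0:ℝ) 1, f x = 1 := by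
      intro x hx
      have hx' : x ∈ Set.Icc (0:ℝ) 1 := ⟨hx.1.le, hx.2⟩
      have h1 : f 1 ≤ f x := hf hx' h11 hx.2
      have h2 : f x ≤ 1 := (hmap x hx').2
      rw [hA] at h1; linarith
    have himg : f '' Set.Ioc (0:ℝ) 1 = {f 1} := by
      apply Set.Subset.antisymm
      · rintro y ⟨x, hx, rfl⟩
        simp [hall x hx, hA]
      · rintro y hy
        rw [Set.mem_singleton_iff] at hy
        exact ⟨1, by norm_num, hy.symm⟩
    constructor
    · rw [hA]; exact hTone 1 h11
    · rw [himg, csSup_singleton]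
  · have hAlt : f 1 < 1 := lt_of_le_of_ne ha01.2 hA
    have ha0 : f 1 = 0 := by
      by_contra h
      have ha0' : 0 < f 1 := lt_of_le_of_ne ha01.1 (Ne.symm h)
      have hx1 : ∀ x, 0 < x → x < 1 → f x = 1 := by
        intro x hx0 hxlt
        rcases lemB x ⟨hx0.le, hxlt.le⟩ 1 h11 hx0 hxlt with h' | h'
        · exfalso; linarith
        · exact h'
      have hhalf : (1/2:ℝ) ∈ Set.Icc (0:ℝ) 1 := by norm_num
      have h34 : f (3/4 : ℝ) = 1 := hx1 (3/4) (by norm_num) (by norm_num)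
      have hTval : T (f (1/2)) (f 1) = f 1 := by
        rw [hx1 (1/2) (by norm_num) (by norm_num), hTcomm 1 h11 (f 1) ha01,
          hTone (f 1) ha01]
      have hmem : (3/4:ℝ) ∈ {s | s ∈ Set.Icc (0:ℝ) 1 ∧ T (f (1/2)) (f 1) < f s} := by
        constructor
        · norm_num
        · rw [hTval, h34]; exact hAlt
      have h1 : (3/4:ℝ) ≤ pinvDec f (T (f (1/2)) (f 1)) := le_csSup (hbdd _) hmem
      have h2 : pinvDec f (T (f (1/2)) (f 1)) ≤ min (1/2) 1 := hFmin (1/2) hhalf 1 h11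
      rw [min_eq_left (by norm_num)] at h2
      linarith
    have hall : ∀ x ∈ Set.Ioc (0:ℝ) 1, f x = 0 := by
      intro u hu
      by_contra h
      have hu' : u ∈ Set.Icc (0:ℝ) 1 := ⟨hu.1.le, hu.2⟩
      have hfu : 0 < f u := lt_of_le_of_ne (hmap u hu').1 (Ne.symm h)
      have hu1 : u < 1 := by
        rcases lt_or_eq_of_le hu.2 with h' | h'
        · exact h'
        · exfalso; rw [h', ha0] at hfu; linarith
      have hx1 : ∀ x, 0 < x → x < u → f x = 1 := by
        intro x hx0 hxu
        rcases lemB x ⟨hx0.le, (hxu.trans hu1).le⟩ u hu' hx0 hxu with h' | h'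
        · exfalso; linarith
        · exact h'
      have hu0 := hu.1
      have hhalf : u/2 ∈ Set.Icc (0:ℝ) 1 := ⟨by linarith, by linarith⟩
      have h34 : f (3*u/4) = 1 := hx1 (3*u/4) (by linarith) (by linarith)
      have hT0 : T (f (u/2)) (f 1) = 0 := by
        rw [hx1 (u/2) (by linarith) (by linarith), ha0, hTcomm 1 h11 0 h01, hTone 0 h01]
      have hmem : 3*u/4 ∈ {s | s ∈ Set.Icc (0:ℝ) 1 ∧ T (f (u/2)) (f 1) < f s} := by
        constructor
        · exact ⟨by linarith, by linarith⟩
        · rw [hT0, h34]; norm_num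
      have h1 : 3*u/4 ≤ pinvDec f (T (f (u/2)) (f 1)) := le_csSup (hbdd _) hmem
      have h2 : pinvDec f (T (f (u/2)) (f 1)) ≤ min (u/2) 1 := hFmin (u/2) hhalf 1 h11
      rw [min_eq_left (by linarith)] at h2
      linarith
    have himg : f '' Set.Ioc (0:ℝ) 1 = {f 1} := by
      apply Set.Subset.antisymm
      · rintro y ⟨x, hx, rfl⟩
        simp [hall x hx, ha0]
      · rintro y hy
        rw [Set.mem_singleton_iff] at hy
        exact ⟨1, by norm_num, hy.symm⟩
    constructor
    · rw [ha0]
      refine le_antisymm ?_ (hTmap 0 h01 0 h01).1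
      exact hTle 0 h01 0 h01
    · rw [himg, csSup_singleton]
end
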